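/- arXiv:1602.06732 — 12 statements merged into one kernel-verified Lean document; each statement's English description precedes it below -/
import Mathlib

section
/- Let n ≥ 1 and 1 ≤ k ≤ n. Let f_1,…,f_m ∈ ℝ[x_1,…,x_n] be polynomials each of which belongs to the ℝ-subalgebra of ℝ[x_1,…,x_n] generated by the elementary symmetric polynomials e_1,…,e_k. If the real variety X = {x ∈ ℝ^n : f_1(x) = ⋯ = f_m(x) = 0} is nonempty, then there exists a point x ∈ X with at most k distinct coordinates (i.e. the set {x_1,…,x_n} has cardinality at most k). -/
/-!
By Newton's identities the values of `e₁, …, e_k` at a point are determined by those of the power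
sums `p₁, …, p_k`, so it suffices to move `x` to a point with the same `p₁, …, p_k` and at most `k`
distinct coordinates. For `k ≥ 2` the common level set of `p₁, …, p_k` lies on the sphere
`p₂ = p₂(x)`, hence is compact, and `p_{k+1}` attains its maximum on it at some `y`. By Lagrange
multipliers the gradients `((i + 1) y_j ^ i)_j` of `p_{i+1}`, `i ≤ k`, are linearly dependent, so
a nonzero polynomial of degree at most `k` vanishes at every coordinate of `y`. For `k = 1` the
constant point with the same mean as `x` works.
-/

open MvPolynomial

section Symmetric

variable {σ : Type*} [Fintype σ]

theorem eval_esymm_eq_of_eval_psum_eq {R : Type*} [Field R] [CharZero R] {k : ℕ} {x y : σ → R}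
    (hp : ∀ i, 1 ≤ i → i ≤ k → eval x (psum σ R i) = eval y (psum σ R i)) :
    ∀ i ≤ k, eval x (esymm σ R i) = eval y (esymm σ R i) := by
  intro r
  induction r using Nat.strong_induction_on with
  | _ r ih =>
    intro hrk
    rcases Nat.eq_zero_or_pos r with rfl | hr
    · simp
    have newton (z : σ → R) := congrArg (eval z) (mul_esymm_eq_sum σ R r)
    simp only [map_mul, map_natCast, map_pow, map_neg, map_one, map_sum] at newton
    refine mul_left_cancel₀ (Nat.cast_ne_zero.2 hr.ne' : (r : R) ≠ 0) ?_
    rw [newton x, newton y]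
    congr 1
    refine Finset.sum_congr rfl fun a ha => ?_
    simp only [Finset.mem_filter, Finset.HasAntidiagonal.mem_antidiagonal] at ha
    rw [ih a.1 ha.2 (ha.2.le.trans hrk), hp a.2 (by omega) (by omega)]

theorem eval_eq_of_mem_adjoin_esymm {R : Type*} [CommRing R] {k : ℕ} {x y : σ → R}
    (he : ∀ i, 1 ≤ i → i ≤ k → eval x (esymm σ R i) = eval y (esymm σ R i))
    {p : MvPolynomial σ R}
    (hp : p ∈ Algebra.adjoin R {p : MvPolynomial σ R | ∃ i, 1 ≤ i ∧ i ≤ k ∧ p = esymm σ R i}) :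
    eval x p = eval y p := by
  refine (AlgHom.eqOn_adjoin_iff (φ := aeval x) (ψ := aeval y)).2 ?_ hp
  rintro _ ⟨i, hi1, hik, rfl⟩
  exact he i hi1 hik

theorem eval_esymm_one_const_average {R : Type*} [Field R] [CharZero R] (x : σ → R) :
    eval (fun _ => (∑ j, x j) / Fintype.card σ) (esymm σ R 1) = eval x (esymm σ R 1) := by
  rcases isEmpty_or_nonempty σ with hσ | hσ
  · simp
  · have hcard : (Fintype.card σ : R) ≠ 0 := Nat.cast_ne_zero.2 Fintype.card_ne_zero
    simp [esymm_one, mul_div_cancel₀ _ hcard]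

end Symmetric

open Polynomial in
theorem ncard_range_le_of_forall_sum_pow_eq_zero {K σ : Type*} [Field K] {k : ℕ}
    {c : Fin (k + 1) → K} (hc : c ≠ 0) {y : σ → K}
    (hy : ∀ j, ∑ i, c i * y j ^ (i : ℕ) = 0) : (Set.range y).ncard ≤ k := by
  set q : K[X] := ((degreeLTEquiv K (k + 1)).symm c).1
  have hq : q ∈ degreeLT K (k + 1) := ((degreeLTEquiv K (k + 1)).symm c).2
  have hq0 : q ≠ 0 := by simpa [q] using hc
  have hroots : Set.range y ⊆ q.rootSet K := by
    rintro _ ⟨j, rfl⟩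
    rw [mem_rootSet_of_ne hq0, Polynomial.coe_aeval_eq_eval, eval_eq_sum_degreeLTEquiv hq]
    simpa [q] using hy j
  calc (Set.range y).ncard ≤ (q.rootSet K).ncard := Set.ncard_le_ncard hroots (q.rootSet_finite K)
    _ ≤ q.natDegree := q.ncard_rootSet_le K
    _ ≤ k := Nat.lt_succ_iff.1 ((natDegree_lt_iff_degree_lt hq0).2 (mem_degreeLT.1 hq))

section PowerSums

variable {σ : Type*} [Fintype σ]

theorem hasStrictFDerivAt_sum_pow (m : ℕ) (y : σ → ℝ) :
    HasStrictFDerivAt (fun z : σ → ℝ => ∑ j, z j ^ m)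
      (∑ j, ((m : ℝ) * y j ^ (m - 1)) • ContinuousLinearMap.proj (R := ℝ) (φ := fun _ : σ => ℝ) j)
      y :=
  HasStrictFDerivAt.fun_sum fun j _ =>
    (hasStrictDerivAt_pow m (y j)).comp_hasStrictFDerivAt y (hasStrictFDerivAt_apply j y)

theorem exists_ne_zero_forall_sum_pow_eq_zero_of_isLocalExtrOn {k : ℕ} {y : σ → ℝ}
    (hy : IsLocalExtrOn (fun z : σ → ℝ => ∑ j, z j ^ (k + 1))
      {z | ∀ i : Fin k, ∑ j, z j ^ ((i : ℕ) + 1) = ∑ j, y j ^ ((i : ℕ) + 1)} y) :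
    ∃ c : Fin (k + 1) → ℝ, c ≠ 0 ∧ ∀ j, ∑ i, c i * y j ^ (i : ℕ) = 0 := by
  classical
  obtain ⟨Λ, Λ₀, hne, hΛ⟩ := hy.exists_multipliers_of_hasStrictFDerivAt
    (fun i => hasStrictFDerivAt_sum_pow _ y) (hasStrictFDerivAt_sum_pow _ y)
  refine ⟨fun i => ((i : ℕ) + 1 : ℝ) * Fin.lastCases (motive := fun _ => ℝ) Λ₀ Λ i,
    fun hc => hne ?_, fun j => ?_⟩
  · have h i : Fin.lastCases (motive := fun _ => ℝ) Λ₀ Λ i = 0 :=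
      (mul_eq_zero.1 (congrFun hc i)).resolve_left (by positivity)
    exact Prod.ext (funext fun i => by simpa using h i.castSucc) (by simpa using h (Fin.last k))
  · simpa [Fin.sum_univ_castSucc, Pi.single_apply, mul_comm, mul_left_comm] using
      congrArg (· (Pi.single j 1)) hΛ

theorem isCompact_setOf_sum_sq_eq (c : ℝ) : IsCompact {z : σ → ℝ | ∑ j, z j ^ 2 = c} := by
  refine Metric.isCompact_of_isClosed_isBounded
    (isClosed_eq (by fun_prop) continuous_const)
    ((Metric.isBounded_closedBall (x := 0) (r := √c)).subset fun z hz => ?_)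
  rw [Metric.mem_closedBall, dist_zero_right, pi_norm_le_iff_of_nonneg (Real.sqrt_nonneg _)]
  intro j
  rw [Real.norm_eq_abs, ← Real.sqrt_sq_eq_abs]
  exact Real.sqrt_le_sqrt <| hz ▸ Finset.single_le_sum (fun i _ => sq_nonneg (z i)) (Finset.mem_univ j)

theorem exists_sum_pow_eq_ncard_range_le {k : ℕ} (hk : 2 ≤ k) (x : σ → ℝ) :
    ∃ y : σ → ℝ, (∀ i : Fin k, ∑ j, y j ^ ((i : ℕ) + 1) = ∑ j, x j ^ ((i : ℕ) + 1)) ∧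
      (Set.range y).ncard ≤ k := by
  set V := {z : σ → ℝ | ∀ i : Fin k, ∑ j, z j ^ ((i : ℕ) + 1) = ∑ j, x j ^ ((i : ℕ) + 1)}
  have hV : IsCompact V := by
    refine (isCompact_setOf_sum_sq_eq (∑ j, x j ^ 2)).of_isClosed_subset ?_ fun z hz => by
      simpa using hz ⟨1, hk⟩
    simp only [V, Set.ofPred_forall]
    exact isClosed_iInter fun i => isClosed_eq (by fun_prop) continuous_const
  obtain ⟨y, hyV, hmax⟩ := hV.exists_isMaxOn ⟨x, fun _ => rfl⟩
    (f := fun z => ∑ j, z j ^ (k + 1)) (by fun_prop)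
  have hlevel : {z | ∀ i : Fin k, ∑ j, z j ^ ((i : ℕ) + 1) = ∑ j, y j ^ ((i : ℕ) + 1)} = V :=
    Set.ext fun z => forall_congr' fun i => by rw [hyV i]
  obtain ⟨c, hc, hroots⟩ := exists_ne_zero_forall_sum_pow_eq_zero_of_isLocalExtrOn
    (hlevel ▸ hmax.localize.isExtr)
  exact ⟨y, hyV, ncard_range_le_of_forall_sum_pow_eq_zero hc hroots⟩

theorem exists_eval_esymm_eq_ncard_range_le {k : ℕ} (hk : 1 ≤ k) (x : σ → ℝ) :
    ∃ y : σ → ℝ, (∀ i, 1 ≤ i → i ≤ k → eval y (esymm σ ℝ i) = eval x (esymm σ ℝ i)) ∧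
      (Set.range y).ncard ≤ k := by
  obtain rfl | hk := hk.eq_or_lt
  · refine ⟨fun _ => (∑ j, x j) / Fintype.card σ, fun i hi1 hik => ?_,
      (Set.ncard_le_ncard Set.range_const_subset).trans_eq (Set.ncard_singleton _)⟩
    obtain rfl : i = 1 := by omega
    exact eval_esymm_one_const_average x
  · obtain ⟨y, hy, hcard⟩ := exists_sum_pow_eq_ncard_range_le hk x
    refine ⟨y, fun i _ hik => eval_esymm_eq_of_eval_psum_eq (fun i hi1 hik => ?_) i hik, hcard⟩
    obtain ⟨i, rfl⟩ : ∃ i' : Fin k, (i' : ℕ) + 1 = i := ⟨⟨i - 1, by omega⟩, by simp; omega⟩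
    simpa [psum] using hy i

end PowerSums

theorem timofte_degree_principle_esymm_general
    (n : ℕ) (k : ℕ) (hk1 : 1 ≤ k)
    (m : ℕ) (f : Fin m → MvPolynomial (Fin n) ℝ)
    (hf : ∀ j, f j ∈ Algebra.adjoin ℝ
      {p : MvPolynomial (Fin n) ℝ | ∃ i, 1 ≤ i ∧ i ≤ k ∧ p = esymm (Fin n) ℝ i})
    (hX : ∃ x : Fin n → ℝ, ∀ j, eval x (f j) = 0) :
    ∃ x : Fin n → ℝ, (∀ j, eval x (f j) = 0) ∧ (Set.range x).ncard ≤ k := by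
  obtain ⟨x, hx⟩ := hX
  obtain ⟨y, hy, hcard⟩ := exists_eval_esymm_eq_ncard_range_le hk1 x
  exact ⟨y, fun j => (eval_eq_of_mem_adjoin_esymm hy (hf j)).trans (hx j), hcard⟩

/-- Timofte's degree principle for the symmetric group `Sₙ` (Theorem 1.1):
a nonempty real variety defined by polynomials in the first `k` elementary
symmetric polynomials contains a point with at most `k` distinct coordinates. -/
theorem timofte_degree_principle_esymm
    (n : ℕ) (hn : 1 ≤ n) (k : ℕ) (hk1 : 1 ≤ k) (hkn : k ≤ n)
    (m : ℕ) (f : Fin m → MvPolynomial (Fin n) ℝ)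
    (hf : ∀ j, f j ∈ Algebra.adjoin ℝ
      {p : MvPolynomial (Fin n) ℝ | ∃ i, 1 ≤ i ∧ i ≤ k ∧ p = esymm (Fin n) ℝ i})
    (hX : ∃ x : Fin n → ℝ, ∀ j, eval x (f j) = 0) :
    ∃ x : Fin n → ℝ, (∀ j, eval x (f j) = 0) ∧ (Set.range x).ncard ≤ k :=
  timofte_degree_principle_esymm_general n k hk1 m f hf hX
end

section
/- Let n ≥ 1 and 1 ≤ k ≤ n. Let f_1,…,f_m ∈ ℝ[x_1,…,x_n] be polynomials each of which belongs to the ℝ-subalgebra of ℝ[x_1,…,x_n] generated by the power sums s_1,…,s_k. If the real variety X = {x ∈ ℝ^n : f_1(x) = ⋯ = f_m(x) = 0} is nonempty, then there exists a point x ∈ X with at most k distinct coordinates (i.e. the set {x_1,…,x_n} has cardinality at most k). -/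
/-!
Every polynomial in `s₁, …, s_k` is constant on a fibre of the map `(s₁, …, s_k) : ℝⁿ → ℝᵏ`,
so it suffices to find a point with at most `k` distinct coordinates in the fibre through a point
of `X`. For `k = 1` the constant point at the mean works. For `k ≥ 2` the fibre is compact, since
`s₂` bounds it, so `s_{k+1}` attains its maximum on it at some `y`. By Lagrange's multiplier rule
some nontrivial combination of the gradients of `s₁, …, s_{k+1}` vanishes at `y`; its `t`-th
coordinate is `q(y_t)` for a nonzero polynomial `q` of degree at most `k`, so `q` has every
coordinate of `y` as a root and `y` has at most `k` distinct coordinates.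
-/

open MvPolynomial Set

variable {ι : Type*} [Fintype ι]

def psumFiber {R : Type*} [CommRing R] (k : ℕ) (x : ι → R) : Set (ι → R) :=
  {y | ∀ j : Fin k, ∑ t, y t ^ ((j : ℕ) + 1) = ∑ t, x t ^ ((j : ℕ) + 1)}

theorem psumFiber_eq_of_mem {R : Type*} [CommRing R] {k : ℕ} {x y : ι → R}
    (hy : y ∈ psumFiber k x) : psumFiber k y = psumFiber k x := by
  ext z
  exact forall_congr' fun j => by rw [hy j]

theorem eval_eq_of_mem_psumFiber {R : Type*} [CommRing R] {k : ℕ} {x y : ι → R}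
    (hy : y ∈ psumFiber k x) {p : MvPolynomial ι R}
    (hp : p ∈ Algebra.adjoin R {p : MvPolynomial ι R | ∃ i, 1 ≤ i ∧ i ≤ k ∧ p = psum ι R i}) :
    eval y p = eval x p := by
  refine (AlgHom.eqOn_adjoin_iff (φ := aeval y) (ψ := aeval x)).2 ?_ hp
  rintro _ ⟨i, hi, hik, rfl⟩
  obtain ⟨j, rfl⟩ : ∃ j : ℕ, i = j + 1 := ⟨i - 1, by omega⟩
  simpa [psum] using hy ⟨j, by omega⟩

theorem const_mean_mem_psumFiber_one (x : ι → ℝ) :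
    (fun _ => (∑ t, x t) / Fintype.card ι) ∈ psumFiber 1 x := by
  intro j
  rcases isEmpty_or_nonempty ι with hι | hι
  · simp
  · have : (Fintype.card ι : ℝ) ≠ 0 := Nat.cast_ne_zero.2 Fintype.card_ne_zero
    simp only [Fin.val_eq_zero, zero_add, pow_one, Finset.sum_const, Finset.card_univ, nsmul_eq_mul]
    field_simp

theorem isClosed_psumFiber (k : ℕ) (x : ι → ℝ) : IsClosed (psumFiber k x) := by
  simp only [psumFiber, ofPred_forall]
  exact isClosed_iInter fun j => isClosed_eq (by fun_prop) continuous_const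

theorem psumFiber_subset_closedBall {k : ℕ} (hk : 2 ≤ k) (x : ι → ℝ) :
    psumFiber k x ⊆ Metric.closedBall 0 √(∑ t, x t ^ 2) := by
  intro y hy
  rw [Metric.mem_closedBall, dist_zero_right, pi_norm_le_iff_of_nonneg (Real.sqrt_nonneg _)]
  intro t
  have hsq : y t ^ 2 ≤ ∑ t, x t ^ 2 :=
    hy ⟨1, hk⟩ ▸ Finset.single_le_sum (fun s _ => sq_nonneg (y s)) (Finset.mem_univ t)
  simpa [Real.sqrt_sq_eq_abs] using Real.sqrt_le_sqrt hsq

theorem isCompact_psumFiber {k : ℕ} (hk : 2 ≤ k) (x : ι → ℝ) : IsCompact (psumFiber k x) :=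
  Metric.isCompact_of_isClosed_isBounded (isClosed_psumFiber k x)
    (Metric.isBounded_closedBall.subset (psumFiber_subset_closedBall hk x))

theorem hasStrictFDerivAt_sum_pow_succ (j : ℕ) (y : ι → ℝ) :
    HasStrictFDerivAt (fun z : ι → ℝ => ∑ t, z t ^ (j + 1))
      (∑ t, ((j + 1 : ℝ) * y t ^ j) • ContinuousLinearMap.proj (R := ℝ) (φ := fun _ : ι => ℝ) t)
      y :=
  HasStrictFDerivAt.fun_sum fun t _ => by
    have h := (hasStrictDerivAt_pow (j + 1) (y t)).comp_hasStrictFDerivAt y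
      (ContinuousLinearMap.proj (R := ℝ) (φ := fun _ : ι => ℝ) t).hasStrictFDerivAt
    rw [Nat.add_sub_cancel, Nat.cast_succ] at h
    exact h

theorem Finset.card_le_of_forall_sum_mul_pow_eq_zero {K : Type*} [CommRing K] [IsDomain K]
    {k : ℕ} {c : Fin (k + 1) → K} (hc : c ≠ 0) {s : Finset K}
    (hs : ∀ a ∈ s, ∑ j, c j * a ^ (j : ℕ) = 0) : s.card ≤ k := by
  by_contra! hlt
  obtain ⟨e⟩ := Function.Embedding.nonempty_of_card_le (α := Fin (k + 1)) (β := s)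
    (by simpa using hlt)
  exact hc (Matrix.eq_zero_of_forall_index_sum_mul_pow_eq_zero
    (Subtype.val_injective.comp e.injective) fun j => hs _ (e j).2)

theorem ncard_range_le_of_isLocalExtrOn {k : ℕ} {y : ι → ℝ}
    (hy : IsLocalExtrOn (fun z : ι → ℝ => ∑ t, z t ^ (k + 1)) (psumFiber k y) y) :
    (range y).ncard ≤ k := by
  obtain ⟨Λ, Λ₀, hne, hΛ⟩ := hy.exists_multipliers_of_hasStrictFDerivAt
    (f := fun (j : Fin k) (z : ι → ℝ) => ∑ t, z t ^ ((j : ℕ) + 1))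
    (fun j => hasStrictFDerivAt_sum_pow_succ j y) (hasStrictFDerivAt_sum_pow_succ k y)
  set c : Fin (k + 1) → ℝ := fun j =>
    Fin.lastCases (motive := fun _ => ℝ) Λ₀ Λ j * ((j : ℕ) + 1 : ℝ)
  have hc : c ≠ 0 := by
    intro hc
    have hcoeff (j : Fin (k + 1)) : Fin.lastCases (motive := fun _ => ℝ) Λ₀ Λ j = 0 := by
      simpa [c, Nat.cast_add_one_ne_zero] using congr_fun hc j
    refine hne (Prod.ext (funext fun j => ?_) ?_)
    · simpa using hcoeff j.castSucc
    · simpa using hcoeff (Fin.last k)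
  have hroot : ∀ t, ∑ j, c j * y t ^ (j : ℕ) = 0 := by
    classical
    intro t
    have hcoord := DFunLike.congr_fun hΛ (Pi.single t 1)
    simp only [add_apply, sum_apply, smul_apply, ContinuousLinearMap.proj_apply, Pi.single_apply,
      smul_eq_mul, mul_ite, mul_one, mul_zero, Finset.sum_ite_eq', Finset.mem_univ, ↓reduceIte,
      zero_apply] at hcoord
    simp only [c, Fin.sum_univ_castSucc, Fin.lastCases_castSucc, Fin.lastCases_last,
      Fin.val_castSucc, Fin.val_last]
    simpa only [mul_assoc] using hcoord
  calc (range y).ncard = (Finset.univ.image y).card := by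
        rw [← ncard_coe_finset, Finset.coe_image, Finset.coe_univ, image_univ]
    _ ≤ k := Finset.card_le_of_forall_sum_mul_pow_eq_zero hc (by simpa using hroot)

theorem exists_mem_psumFiber_ncard_range_le {k : ℕ} (hk : 1 ≤ k) (x : ι → ℝ) :
    ∃ y ∈ psumFiber k x, (range y).ncard ≤ k := by
  obtain rfl | hk2 := hk.eq_or_lt
  · exact ⟨_, const_mean_mem_psumFiber_one x,
      (ncard_le_ncard range_const_subset).trans (ncard_singleton _).le⟩
  obtain ⟨y, hy, hmax⟩ := (isCompact_psumFiber hk2 x).exists_isMaxOn ⟨x, fun _ => rfl⟩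
    (by fun_prop : Continuous fun z : ι → ℝ => ∑ t, z t ^ (k + 1)).continuousOn
  refine ⟨y, hy, ncard_range_le_of_isLocalExtrOn ?_⟩
  rw [psumFiber_eq_of_mem hy]
  exact hmax.localize.isExtr

theorem degree_principle_psum_general
    (n : ℕ) (k : ℕ) (hk1 : 1 ≤ k)
    (m : ℕ) (f : Fin m → MvPolynomial (Fin n) ℝ)
    (hf : ∀ j, f j ∈ Algebra.adjoin ℝ
      {p : MvPolynomial (Fin n) ℝ | ∃ i, 1 ≤ i ∧ i ≤ k ∧ p = psum (Fin n) ℝ i})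
    (hX : ∃ x : Fin n → ℝ, ∀ j, eval x (f j) = 0) :
    ∃ x : Fin n → ℝ, (∀ j, eval x (f j) = 0) ∧ (Set.range x).ncard ≤ k := by
  obtain ⟨x, hx⟩ := hX
  obtain ⟨y, hy, hcard⟩ := exists_mem_psumFiber_ncard_range_le hk1 x
  exact ⟨y, fun j => (eval_eq_of_mem_psumFiber hy (hf j)).trans (hx j), hcard⟩

/-- Theorem 1.2 for type `A_{n-1} ≅ Sₙ` with the power sums as basic invariants:
a nonempty real variety defined by polynomials in the first `k` power sums
contains a point with at most `k` distinct coordinates. -/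
theorem degree_principle_psum
    (n : ℕ) (hn : 1 ≤ n) (k : ℕ) (hk1 : 1 ≤ k) (hkn : k ≤ n)
    (m : ℕ) (f : Fin m → MvPolynomial (Fin n) ℝ)
    (hf : ∀ j, f j ∈ Algebra.adjoin ℝ
      {p : MvPolynomial (Fin n) ℝ | ∃ i, 1 ≤ i ∧ i ≤ k ∧ p = psum (Fin n) ℝ i})
    (hX : ∃ x : Fin n → ℝ, ∀ j, eval x (f j) = 0) :
    ∃ x : Fin n → ℝ, (∀ j, eval x (f j) = 0) ∧ (Set.range x).ncard ≤ k :=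
  degree_principle_psum_general n k hk1 m f hf hX
end

section
/- Let n ≥ 1, 0 ≤ k ≤ n−1, and q ∈ ℝ^n. Let J be the (k+1) × n matrix whose (i,j) entry is the partial derivative ∂s_i/∂x_j evaluated at q, namely J_{ij} = i·q_j^{i−1}, for 1 ≤ i ≤ k+1 and 1 ≤ j ≤ n. Then q has at most k distinct coordinates (i.e. the set {q_1,…,q_n} has cardinality at most k) if and only if the rank of J is at most k. -/
open Matrix


/-- Corollary 2.3 for `G = Sₙ` with the power sums as basic invariants:
`q ∈ ℝⁿ` has at most `k` distinct coordinates if and only if the Jacobian of the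
first `k+1` power sums at `q`, the `(k+1) × n` matrix with entries
`J_{ij} = i·q_j^{i-1}` (for `1 ≤ i ≤ k+1`), has rank at most `k`. -/
theorem stratum_iff_jacobian_rank_Sn
    (n : ℕ) (hn : 1 ≤ n) (k : ℕ) (hk : k ≤ n - 1) (q : Fin n → ℝ) :
    (Set.range q).ncard ≤ k ↔
      (Matrix.of fun (i : Fin (k + 1)) (j : Fin n) =>
        ((i : ℕ) + 1 : ℝ) * q j ^ (i : ℕ)).rank ≤ k := by
  set M : Matrix (Fin (k + 1)) (Fin n) ℝ :=
    Matrix.of fun (i : Fin (k + 1)) (j : Fin n) =>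
      ((i : ℕ) + 1 : ℝ) * q j ^ (i : ℕ) with hM
  constructor
  · -- forward: few distinct values ⇒ small column span
    intro h
    set F : ℝ → (Fin (k + 1) → ℝ) := fun x i => ((i : ℕ) + 1 : ℝ) * x ^ (i : ℕ) with hF
    have hcols : Set.range Mᵀ = F '' Set.range q := by
      rw [← Set.range_comp]
      rfl
    have hfin : (Set.range Mᵀ).Finite := by
      rw [hcols]
      exact ((Set.finite_range q).image F)
    have hcard : hfin.toFinset.card ≤ k := by
      rw [← Set.ncard_eq_toFinset_card _ hfin]
      calc (Set.range Mᵀ).ncard = (F '' Set.range q).ncard := by rw [hcols]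
        _ ≤ (Set.range q).ncard := Set.ncard_image_le (Set.finite_range q)
        _ ≤ k := h
    calc M.rank = Module.finrank ℝ (Submodule.span ℝ (Set.range Mᵀ)) :=
          Matrix.rank_eq_finrank_span_cols M
      _ = Module.finrank ℝ (Submodule.span ℝ (hfin.toFinset : Set (Fin (k+1) → ℝ))) := by
          rw [Set.Finite.coe_toFinset]
      _ ≤ hfin.toFinset.card := finrank_span_finset_le_card _
      _ ≤ k := hcard
  · -- backward, by contraposition
    intro hr
    by_contra h
    push_neg at h
    have hk1 : k + 1 ≤ (Set.range q).ncard := h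
    obtain ⟨t, hts, htc⟩ := Set.exists_subset_card_eq hk1
    have htf : t.Finite := (Set.finite_range q).subset hts
    have htfc : htf.toFinset.card = k + 1 := by
      rw [← Set.ncard_eq_toFinset_card t htf]; exact htc
    let e := htf.toFinset.equivFinOfCardEq htfc
    set v : Fin (k + 1) → ℝ := fun i => (e.symm i : ℝ) with hv
    have hvinj : Function.Injective v := by
      intro a b hab
      exact e.symm.injective (Subtype.ext hab)
    have hmem : ∀ i, v i ∈ Set.range q := fun i =>
      hts (htf.mem_toFinset.mp (e.symm i).2)
    choose g hg using hmem
    -- the square submatrix on columns g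
    set N : Matrix (Fin (k + 1)) (Fin (k + 1)) ℝ :=
      Matrix.of fun i j => ((i : ℕ) + 1 : ℝ) * v j ^ (i : ℕ) with hN
    have hNdet : N.det ≠ 0 := by
      have hfac : N = (Matrix.diagonal fun i : Fin (k+1) => ((i : ℕ) + 1 : ℝ)) *
          (Matrix.vandermonde v)ᵀ := by
        ext i j
        simp [hN, Matrix.diagonal_mul, Matrix.vandermonde, mul_comm]
      rw [hfac, Matrix.det_mul, Matrix.det_diagonal, Matrix.det_transpose]
      refine mul_ne_zero (Finset.prod_ne_zero_iff.mpr fun i _ => ?_) ?_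
      · positivity
      · exact Matrix.det_vandermonde_ne_zero_iff.mpr hvinj
    have hNrank : N.rank = k + 1 := by
      have := Matrix.rank_of_isUnit N ((Matrix.isUnit_iff_isUnit_det N).mpr
        (isUnit_iff_ne_zero.mpr hNdet))
      simpa using this
    -- N is M times a selection matrix
    set P : Matrix (Fin n) (Fin (k + 1)) ℝ :=
      Matrix.of fun j l => if j = g l then (1 : ℝ) else 0 with hP
    have hMP : N = M * P := by
      ext i l
      simp [hN, hP, Matrix.mul_apply, mul_ite, mul_one, mul_zero, hM, hg]
    have : N.rank ≤ M.rank := by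
      rw [hMP]; exact Matrix.rank_mul_le_left M P
    omega
end

section
/- Let n ≥ 1, 0 ≤ k ≤ n−1, and q ∈ ℝ^n. Let J be the (k+1) × n matrix whose (i,j) entry is the partial derivative ∂s_{2i}/∂x_j evaluated at q, namely J_{ij} = 2i·q_j^{2i−1}, for 1 ≤ i ≤ k+1 and 1 ≤ j ≤ n. Then the nonzero coordinates of q take at most k distinct absolute values (i.e. the set {|q_i| : q_i ≠ 0} has cardinality at most k) if and only if the rank of J is at most k. -/
/-!
The `j`-th column of the Jacobian is `v(q_j)` with `v(t) = (2i·t^(2i-1))ᵢ`. Since `v` is odd,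
every column lies in the span of the `v(a)` with `a` a nonzero absolute value of a coordinate,
so the rank is at most the number `N` of such values. Conversely, choosing `m = min(k+1, N)`
coordinates `x_1, …, x_m` with distinct nonzero absolute values, the minor on the first `m` rows
and these columns factors as `diag(2i) · Vandermonde(x_l²)ᵀ · diag(x_l)`, which is invertible.
Hence the rank equals `min(k+1, N)`, and it is at most `k` exactly when `N ≤ k`.
-/

open Function Matrix Module Submodule

theorem Set.exists_fin_comp_injective_of_le_ncard_image {α β : Type*} [Finite α] (g : α → β)
    {s : Set α} {m : ℕ} (h : m ≤ (g '' s).ncard) :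
    ∃ f : Fin m → α, (∀ l, f l ∈ s) ∧ Injective (g ∘ f) := by
  obtain ⟨t, hts, rfl⟩ := Set.exists_subset_card_eq h
  have : Finite t := ((Set.toFinite s).image g).subset hts
  have e : Fin t.ncard ≃ t := by rw [← Nat.card_coe_set_eq]; exact (Finite.equivFin t).symm
  choose f hfs hgf using fun l => hts (e l).2
  exact ⟨f, hfs, fun l l' hll => e.injective (Subtype.ext (by simpa [hgf] using hll))⟩

theorem Matrix.rank_le_ncard_of_col_mem_span {m n K : Type*} [Fintype m] [Fintype n] [Field K]
    (M : Matrix m n K) {s : Set (m → K)} (hs : s.Finite) (h : ∀ j, M.col j ∈ span K s) :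
    M.rank ≤ s.ncard := by
  have := hs.fintype
  rw [rank_eq_finrank_span_cols, Set.ncard_eq_toFinset_card']
  exact (finrank_mono (span_le.2 (Set.range_subset_iff.2 h))).trans (finrank_span_le_card s)

theorem Matrix.det_of_mul_pow_two_mul_add_one {R : Type*} [CommRing R] {m : ℕ} (c x : Fin m → R) :
    (of fun i l => c i * x l ^ (2 * (i : ℕ) + 1)).det =
      (∏ i, c i) * (∏ l, x l) * (vandermonde fun l => x l ^ 2).det := by
  have hfac : (of fun i l => c i * x l ^ (2 * (i : ℕ) + 1)) =
      diagonal c * (vandermonde fun l => x l ^ 2)ᵀ * diagonal x := by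
    ext i l
    simp only [mul_diagonal, diagonal_mul, transpose_apply, vandermonde_apply, of_apply]
    ring
  rw [hfac, det_mul, det_mul, det_transpose, det_diagonal, det_diagonal]
  ring

section

variable {R : Type*} [CommRing R] {ι : Type*}

/-- Entry `i` is `d/dt t^(2(i+1))`, so `evenPowDerivs k (q j)` is the `j`-th column of the
Jacobian of `s₂, …, s_{2(k+1)}` at `q`. -/
def evenPowDerivs (k : ℕ) (t : R) : Fin (k + 1) → R :=
  fun i => 2 * ((i : ℕ) + 1) * t ^ (2 * (i : ℕ) + 1)

def bnJacobian (k : ℕ) (q : ι → R) : Matrix (Fin (k + 1)) ι R :=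
  of fun i j => evenPowDerivs k (q j) i

def nonzeroAbsValues [LinearOrder R] (q : ι → R) : Set R :=
  (fun i => |q i|) '' {i | q i ≠ 0}

theorem evenPowDerivs_zero (k : ℕ) : evenPowDerivs k (0 : R) = 0 := by
  ext i
  simp [evenPowDerivs]

theorem evenPowDerivs_neg (k : ℕ) (t : R) : evenPowDerivs k (-t) = -evenPowDerivs k t := by
  ext i
  simp [evenPowDerivs, Odd.neg_pow (odd_two_mul_add_one _)]

theorem evenPowDerivs_mem_span_abs [LinearOrder R] (k : ℕ) (t : R) :
    evenPowDerivs k t ∈ span R {evenPowDerivs k |t|} := by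
  rcases abs_choice t with h | h
  · rw [h]
    exact subset_span rfl
  · rw [h, evenPowDerivs_neg]
    exact mem_span_singleton.2 ⟨-1, by simp⟩

end

section

variable {K : Type*} [Field K] [LinearOrder K] {ι : Type*} [Fintype ι]

theorem rank_bnJacobian_le_ncard (k : ℕ) (q : ι → K) :
    (bnJacobian k q).rank ≤ (nonzeroAbsValues q).ncard := by
  have hfin : (nonzeroAbsValues q).Finite := (Set.toFinite _).image _
  refine ((bnJacobian k q).rank_le_ncard_of_col_mem_span (hfin.image (evenPowDerivs k))
    fun j => ?_).trans (Set.ncard_image_le hfin)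
  by_cases hq : q j = 0
  · rw [show (bnJacobian k q).col j = evenPowDerivs k (q j) from rfl, hq, evenPowDerivs_zero]
    exact zero_mem _
  · refine span_mono ?_ (evenPowDerivs_mem_span_abs k (q j))
    exact Set.singleton_subset_iff.2 ⟨|q j|, ⟨j, hq, rfl⟩, rfl⟩

theorem le_rank_bnJacobian [IsStrictOrderedRing K] (k : ℕ) (q : ι → K) :
    min (k + 1) (nonzeroAbsValues q).ncard ≤ (bnJacobian k q).rank := by
  set m := min (k + 1) (nonzeroAbsValues q).ncard
  obtain ⟨f, hf0, hfinj⟩ :=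
    Set.exists_fin_comp_injective_of_le_ncard_image (m := m) (fun i => |q i|) (min_le_right _ _)
  let M := (bnJacobian k q).submatrix (Fin.castLE (min_le_left _ _ : m ≤ k + 1)) f
  have hdet : M.det ≠ 0 := by
    rw [show M.det = _ from
      det_of_mul_pow_two_mul_add_one (fun i : Fin m => (2 * ((i : ℕ) + 1) : K)) (q ∘ f)]
    refine mul_ne_zero (mul_ne_zero ?_ ?_) ?_
    · exact Finset.prod_ne_zero_iff.2 fun i _ => by positivity
    · exact Finset.prod_ne_zero_iff.2 fun l _ => hf0 l
    · exact det_vandermonde_ne_zero_iff.2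
        fun l l' h => hfinj ((sq_eq_sq_iff_abs_eq_abs _ _).1 h)
  calc m = M.rank := by
        rw [rank_of_isUnit M ((isUnit_iff_isUnit_det M).2 hdet.isUnit), Fintype.card_fin]
    _ ≤ (bnJacobian k q).rank := rank_submatrix_le _ _ _

theorem rank_bnJacobian [IsStrictOrderedRing K] (k : ℕ) (q : ι → K) :
    (bnJacobian k q).rank = min (k + 1) (nonzeroAbsValues q).ncard :=
  le_antisymm
    (le_min ((rank_le_card_height _).trans_eq (Fintype.card_fin _)) (rank_bnJacobian_le_ncard k q))
    (le_rank_bnJacobian k q)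

end

theorem stratum_iff_jacobian_rank_Bn_general
    (n : ℕ) (k : ℕ) (q : Fin n → ℝ) :
    ((fun i => |q i|) '' {i | q i ≠ 0}).ncard ≤ k ↔
      (Matrix.of fun (i : Fin (k + 1)) (j : Fin n) =>
        (2 * ((i : ℕ) + 1) : ℝ) * q j ^ (2 * (i : ℕ) + 1)).rank ≤ k := by
  change (nonzeroAbsValues q).ncard ≤ k ↔ (bnJacobian k q).rank ≤ k
  rw [rank_bnJacobian]
  omega

/-- Corollary 2.3 for `G = Bₙ` with the even power sums `s₂, s₄, …` as basic
invariants: the nonzero coordinates of `q ∈ ℝⁿ` take at most `k` distinct absolute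
values if and only if the Jacobian of `s₂, …, s_{2(k+1)}` at `q`, the `(k+1) × n`
matrix with entries `J_{ij} = 2i·q_j^{2i-1}` (for `1 ≤ i ≤ k+1`), has rank at most `k`. -/
theorem stratum_iff_jacobian_rank_Bn
    (n : ℕ) (hn : 1 ≤ n) (k : ℕ) (hk : k ≤ n - 1) (q : Fin n → ℝ) :
    ((fun i => |q i|) '' {i | q i ≠ 0}).ncard ≤ k ↔
      (Matrix.of fun (i : Fin (k + 1)) (j : Fin n) =>
        (2 * ((i : ℕ) + 1) : ℝ) * q j ^ (2 * (i : ℕ) + 1)).rank ≤ k :=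
  stratum_iff_jacobian_rank_Bn_general n k q
end

section
/- Let n ≥ 3 and 1 ≤ k ≤ n−2. Let f_1,…,f_m ∈ ℝ[x_1,…,x_n] be polynomials each belonging to the ℝ-subalgebra generated by the even power sums s_2, s_4, …, s_{2k}. If the real variety X = {x ∈ ℝ^n : f_1(x) = ⋯ = f_m(x) = 0} is nonempty, then X contains a point of H_k(D_n), i.e. there exists x ∈ X such that either x has exactly one zero coordinate and its nonzero coordinates take at most k−1 distinct absolute values, or x does not have exactly one zero coordinate and its nonzero coordinates take at most k distinct absolute values. -/
/-!
Passing to `y = x²` coordinatewise, the polynomials `f j` only see the power sums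
`s₁, …, s_k` of `y ≥ 0`. On the compact set of `z ≥ 0` with these power sums, take a maximiser
`z` of `(-1)^k s_{k+1}`. If `z` took `k + 1` distinct values, then on `k + 1` coordinates carrying
them `(s₁, …, s_{k+1})` is a local diffeomorphism (its Jacobian is a Vandermonde matrix), so one
can raise `(-1)^k s_{k+1}` keeping `s₁, …, s_k` fixed; a coordinate equal to `0` then moves to
positive values, by the sign of a Lagrange interpolation weight. So `z` takes at most `k` values,
zero included, and `√z` lies in `H_k(Dₙ)`.
-/

open MvPolynomial

/-- Membership in the stratum `H_k(Dₙ)` of the reflection arrangement of `Dₙ`: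
either `x` has exactly one zero coordinate and its nonzero coordinates take at most
`k-1` distinct absolute values, or `x` does not have exactly one zero coordinate
and its nonzero coordinates take at most `k` distinct absolute values. -/
def memStratumDn {n : ℕ} (k : ℕ) (x : Fin n → ℝ) : Prop :=
  ({i | x i = 0}.ncard = 1 ∧ ((fun i => |x i|) '' {i | x i ≠ 0}).ncard ≤ k - 1) ∨
  ({i | x i = 0}.ncard ≠ 1 ∧ ((fun i => |x i|) '' {i | x i ≠ 0}).ncard ≤ k)

open Filter Topology Matrix Polynomial Finset

theorem HasDerivAt.eventually_nhdsGT_lt {f : ℝ → ℝ} {f' x : ℝ} (hf : HasDerivAt f f' x)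
    (hf' : 0 < f') : ∀ᶠ t in 𝓝[>] x, f x < f t := by
  have hslope := (hasDerivAt_iff_tendsto_slope.1 hf).mono_left (nhdsGT_le_nhdsNE x)
  filter_upwards [hslope.eventually (eventually_gt_nhds hf'), self_mem_nhdsWithin]
    with t hpos (hxt : x < t)
  simpa [slope_def_field, div_pos_iff, sub_pos, hxt, hxt.not_gt] using hpos

theorem HasStrictFDerivAt.exists_hasDerivAt_lift_line {𝕜 E F : Type*}
    [NontriviallyNormedField 𝕜] [NormedAddCommGroup E] [NormedSpace 𝕜 E] [CompleteSpace E]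
    [NormedAddCommGroup F] [NormedSpace 𝕜 F] {f : E → F} {L : E ≃L[𝕜] F} {a : E}
    (hf : HasStrictFDerivAt f (L : E →L[𝕜] F) a) (d : F) :
    ∃ c : 𝕜 → E, c 0 = a ∧ HasDerivAt c (L.symm d) 0 ∧
      ∀ᶠ t in 𝓝 0, f (c t) = f a + t • d := by
  have hline : HasDerivAt (fun t : 𝕜 => f a + t • d) d 0 := by
    simpa using ((hasDerivAt_id (0 : 𝕜)).smul_const d).const_add (f a)
  have hline0 : f a + (0 : 𝕜) • d = f a := by simp
  refine ⟨fun t => hf.localInverse f L a (f a + t • d), ?_, ?_, ?_⟩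
  · simp
  · have := hf.to_localInverse.hasFDerivAt
    rw [← hline0] at this
    exact this.comp_hasDerivAt 0 hline
  · have := hf.eventually_right_inverse
    rw [← hline0] at this
    exact hline.continuousAt.eventually this

/-- Normalised so that its Jacobian at `w` is the transposed Vandermonde matrix of `w`. -/
noncomputable def scaledPowerSums {m : ℕ} (w : Fin m → ℝ) : Fin m → ℝ :=
  fun i => ((i : ℕ) + 1 : ℝ)⁻¹ * ∑ l, w l ^ ((i : ℕ) + 1)

theorem hasStrictFDerivAt_scaledPowerSums {m : ℕ} (w : Fin m → ℝ) :
    HasStrictFDerivAt scaledPowerSums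
      (LinearMap.toContinuousLinearMap (toLin' (vandermonde w)ᵀ)) w := by
  refine hasStrictFDerivAt_pi'.2 fun i => ?_
  have hpow (l : Fin m) := (hasStrictFDerivAt_apply (𝕜 := ℝ) l w).pow ((i : ℕ) + 1)
  have hsum := (HasStrictFDerivAt.fun_sum (u := Finset.univ) fun l _ => hpow l).const_mul
    ((i : ℕ) + 1 : ℝ)⁻¹
  refine hsum.congr_fderiv (ContinuousLinearMap.ext fun v => ?_)
  simp [mulVec, dotProduct, vandermonde, Finset.mul_sum, ← mul_assoc, Nat.cast_add_one_ne_zero]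

theorem Matrix.mulVec_transpose_vandermonde_injective {m : ℕ} {w : Fin m → ℝ}
    (hw : Function.Injective w) :
    Function.Injective (vandermonde w)ᵀ.mulVec := by
  rw [mulVec_injective_iff_isUnit, isUnit_iff_isUnit_det, det_transpose]
  exact (det_vandermonde_ne_zero_iff.2 hw).isUnit

theorem Polynomial.sum_eval_mul_eq_coeff_mul {R ι : Type*} [CommRing R] [Fintype ι] {m : ℕ}
    (w v : ι → R) (hv : ∀ i < m, ∑ l, w l ^ i * v l = 0) {p : R[X]} (hp : p.natDegree ≤ m) :
    ∑ l, p.eval (w l) * v l = p.coeff m * ∑ l, w l ^ m * v l := by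
  calc ∑ l, p.eval (w l) * v l
      = ∑ i ∈ range (m + 1), p.coeff i * ∑ l, w l ^ i * v l := by
        simp_rw [eval_eq_sum_range' (Nat.lt_succ_of_le hp), Finset.sum_mul, Finset.mul_sum]
        rw [Finset.sum_comm]
        exact Finset.sum_congr rfl fun i _ => Finset.sum_congr rfl fun l _ => by ring
    _ = p.coeff m * ∑ l, w l ^ m * v l := by
        rw [Finset.sum_range_succ, Finset.sum_eq_zero fun i hi => by
          rw [hv i (Finset.mem_range.1 hi), mul_zero], zero_add]

theorem prod_erase_sub_mul_eq_sum_pow_mul {R : Type*} [CommRing R] [Nontrivial R] {m : ℕ}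
    (w v : Fin (m + 1) → R) (hv : ∀ i < m, ∑ l, w l ^ i * v l = 0) (l₀ : Fin (m + 1)) :
    (∏ l ∈ univ.erase l₀, (w l₀ - w l)) * v l₀ = ∑ l, w l ^ m * v l := by
  set q := Lagrange.nodal (univ.erase l₀) w
  have hq : q.natDegree = m := by simp [q, Lagrange.natDegree_nodal]
  have key := sum_eval_mul_eq_coeff_mul w v hv hq.le
  have hlead : q.coeff m = 1 := hq ▸ Lagrange.nodal_monic.coeff_natDegree
  rw [hlead, one_mul, Finset.sum_eq_single l₀
    (fun l _ hl => by rw [Lagrange.eval_nodal_at_node (by simpa using hl), zero_mul]) (by simp),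
    Lagrange.eval_nodal] at key
  exact key

theorem pos_of_vandermonde_transpose_mulVec_eq {k : ℕ} {w v : Fin (k + 1) → ℝ}
    (hw : Function.Injective w) (hw0 : ∀ l, 0 ≤ w l)
    (hv : (vandermonde w)ᵀ *ᵥ v = Pi.single (Fin.last k) ((-1) ^ k)) {l₀ : Fin (k + 1)}
    (hl₀ : w l₀ = 0) : 0 < v l₀ := by
  have hsum (i : Fin (k + 1)) :
      ∑ l, w l ^ (i : ℕ) * v l = if i = Fin.last k then (-1) ^ k else 0 := by
    simpa [mulVec, dotProduct, vandermonde, Pi.single_apply] using congrFun hv i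
  -- Lagrange: `(∏_{l ≠ l₀} (w l₀ - w l)) * v l₀ = (-1)^k`, and the product is
  -- `(-1)^k ∏_{l ≠ l₀} w l` when `w l₀ = 0`.
  have hinterp := prod_erase_sub_mul_eq_sum_pow_mul w v (fun i hi => by
    simpa [Fin.ext_iff, hi.ne] using hsum ⟨i, by omega⟩) l₀
  have hlast := hsum (Fin.last k)
  rw [Fin.val_last, if_pos rfl] at hlast
  rw [hlast] at hinterp
  have hprod : 0 < ∏ l ∈ univ.erase l₀, w l := Finset.prod_pos fun l hl =>
    (hw0 l).lt_of_ne fun h => (Finset.ne_of_mem_erase hl) (hw (h.symm.trans hl₀.symm))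
  simp only [hl₀, zero_sub, Finset.prod_neg, Finset.card_erase_of_mem (Finset.mem_univ _),
    Finset.card_univ, Fintype.card_fin, add_tsub_cancel_right] at hinterp
  rw [mul_assoc, mul_eq_left₀ (pow_ne_zero _ (by norm_num))] at hinterp
  exact (pos_iff_pos_of_mul_pos (hinterp ▸ one_pos)).1 hprod

theorem exists_nonneg_sum_pow_eq_of_injective {k : ℕ} (w : Fin (k + 1) → ℝ)
    (hw : Function.Injective w) (hw0 : ∀ l, 0 ≤ w l) :
    ∃ u : Fin (k + 1) → ℝ, (∀ l, 0 ≤ u l) ∧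
      (∀ p, 1 ≤ p → p ≤ k → ∑ l, u l ^ p = ∑ l, w l ^ p) ∧
      (-1) ^ k * ∑ l, w l ^ (k + 1) < (-1) ^ k * ∑ l, u l ^ (k + 1) := by
  set L : (Fin (k + 1) → ℝ) ≃L[ℝ] (Fin (k + 1) → ℝ) :=
    (LinearEquiv.ofInjectiveEndo (toLin' (vandermonde w)ᵀ)
      (Matrix.mulVec_transpose_vandermonde_injective hw)).toContinuousLinearEquiv
  have hL : HasStrictFDerivAt scaledPowerSums (L : (Fin (k + 1) → ℝ) →L[ℝ] _) w :=
    hasStrictFDerivAt_scaledPowerSums w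
  -- Lift the line `t ↦ Ψ w + t • d` through the local inverse of `Ψ = scaledPowerSums`:
  -- it keeps `s₁, …, s_k` and raises `(-1)^k s_{k+1}`.
  set d : Fin (k + 1) → ℝ := Pi.single (Fin.last k) ((-1) ^ k)
  obtain ⟨c, hc0, hc, hcline⟩ := hL.exists_hasDerivAt_lift_line d
  have hpos (l : Fin (k + 1)) : ∀ᶠ t in 𝓝[>] 0, 0 < c t l := by
    have hcl := hasDerivAt_pi.1 hc l
    rcases (hw0 l).lt_or_eq with hl | hl
    · rw [← hc0] at hl
      exact (hcl.continuousAt.eventually (eventually_gt_nhds hl)).filter_mono nhdsWithin_le_nhds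
    · have hderiv : 0 < L.symm d l := pos_of_vandermonde_transpose_mulVec_eq hw hw0
        (L.apply_symm_apply d) hl.symm
      simpa [hc0, ← hl] using hcl.eventually_nhdsGT_lt hderiv
  obtain ⟨t, ⟨hline, hu⟩, ht⟩ := (((hcline.filter_mono nhdsWithin_le_nhds).and
    (eventually_all.2 hpos)).and self_mem_nhdsWithin).exists
  refine ⟨c t, fun l => (hu l).le, fun p hp hpk => ?_, ?_⟩
  · have h := congrFun hline ⟨p - 1, by omega⟩
    have hne : (⟨p - 1, by omega⟩ : Fin (k + 1)) ≠ Fin.last k := by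
      rw [Ne, Fin.ext_iff, Fin.val_last]; dsimp only; omega
    simp only [scaledPowerSums, Nat.sub_add_cancel hp, Pi.add_apply, Pi.smul_apply, d,
      Pi.single_eq_of_ne hne, smul_eq_mul, mul_zero, add_zero, mul_eq_mul_left_iff,
      inv_eq_zero] at h
    exact h.resolve_right (Nat.cast_add_one_ne_zero _)
  · have h := congrFun hline (Fin.last k)
    simp only [scaledPowerSums, Fin.val_last, Pi.add_apply, Pi.smul_apply, Pi.single_eq_same,
      smul_eq_mul, d] at h
    have hsq : ((-1 : ℝ) ^ k) ^ 2 = 1 := by rw [← pow_mul, mul_comm, pow_mul]; norm_num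
    field_simp at h
    rw [h, mul_add, lt_add_iff_pos_right, show (-1 : ℝ) ^ k * ((k + 1) * t * (-1) ^ k)
      = (k + 1) * t * ((-1) ^ k) ^ 2 by ring, hsq, mul_one]
    exact mul_pos (by positivity) ht

theorem Function.Injective.sum_extend_sub_sum {ι κ α M : Type*} [Fintype ι] [Fintype κ]
    [AddCommGroup M] {e : κ → ι} (he : Function.Injective e) (u : κ → α) (z : ι → α)
    (F : α → M) :
    ∑ j, F (Function.extend e u z j) - ∑ j, F (z j) = ∑ l, (F (u l) - F (z (e l))) := by
  classical
  rw [← Finset.sum_sub_distrib, ← Finset.sum_subset (Finset.subset_univ (univ.image e))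
    fun j _ hj => by rw [Function.extend_apply' _ _ _ (by simpa using hj), sub_self],
    Finset.sum_image he.injOn]
  simp [he.extend_apply]

theorem exists_injective_comp_of_le_ncard_range {α β : Type*} [Finite α] {z : α → β} {m : ℕ}
    (h : m ≤ (Set.range z).ncard) : ∃ e : Fin m → α, Function.Injective (z ∘ e) := by
  classical
  have := Fintype.ofFinite α
  rw [Set.ncard_eq_toFinset_card', Set.toFinset_card] at h
  obtain ⟨e⟩ := Function.Embedding.nonempty_of_card_le ((Fintype.card_fin m).trans_le h)
  refine ⟨Set.rangeSplitting z ∘ e, fun a b hab => e.injective (Subtype.ext ?_)⟩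
  simpa [Set.apply_rangeSplitting] using hab

theorem exists_nonneg_sum_pow_eq_of_lt_ncard_range {ι : Type*} [Fintype ι] {k : ℕ} (z : ι → ℝ)
    (hz : ∀ j, 0 ≤ z j) (hk : k < (Set.range z).ncard) :
    ∃ z' : ι → ℝ, (∀ j, 0 ≤ z' j) ∧ (∀ p, 1 ≤ p → p ≤ k → ∑ j, z' j ^ p = ∑ j, z j ^ p) ∧
      (-1) ^ k * ∑ j, z j ^ (k + 1) < (-1) ^ k * ∑ j, z' j ^ (k + 1) := by
  obtain ⟨e, hze⟩ := exists_injective_comp_of_le_ncard_range hk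
  have he : Function.Injective e := hze.of_comp
  obtain ⟨u, hu, hsum, hlt⟩ := exists_nonneg_sum_pow_eq_of_injective (z ∘ e) hze fun l => hz _
  have hdiff (p : ℕ) := he.sum_extend_sub_sum u z (· ^ p)
  simp only [Finset.sum_sub_distrib, Function.comp_apply] at hsum hlt hdiff
  refine ⟨Function.extend e u z, fun j => ?_, fun p hp hpk => ?_, ?_⟩
  · by_cases hj : ∃ l, e l = j
    · obtain ⟨l, rfl⟩ := hj
      rw [he.extend_apply]
      exact hu l
    · rw [Function.extend_apply' _ _ _ hj]
      exact hz j
  · rw [← sub_eq_zero, hdiff, hsum p hp hpk, sub_self]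
  · rw [← sub_pos, ← mul_sub, hdiff, mul_sub, sub_pos]
    exact hlt

theorem isCompact_nonneg_sum_pow_eq {ι : Type*} [Fintype ι] {k : ℕ} (hk : 1 ≤ k) (y : ι → ℝ) :
    IsCompact {z : ι → ℝ | (∀ j, 0 ≤ z j) ∧ ∀ p, 1 ≤ p → p ≤ k → ∑ j, z j ^ p = ∑ j, y j ^ p} := by
  have hclosed : IsClosed
      {z : ι → ℝ | (∀ j, 0 ≤ z j) ∧ ∀ p, 1 ≤ p → p ≤ k → ∑ j, z j ^ p = ∑ j, y j ^ p} := by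
    simp only [Set.ofPred_and, Set.ofPred_forall]
    exact (isClosed_iInter fun j => isClosed_le continuous_const (continuous_apply j)).inter
      (isClosed_iInter fun p => isClosed_iInter fun _ => isClosed_iInter fun _ =>
        isClosed_eq (by fun_prop) continuous_const)
  refine (isCompact_univ_pi fun _ => isCompact_Icc (a := 0) (b := ∑ j, y j)).of_isClosed_subset
    hclosed fun z ⟨hz, hsum⟩ j _ => ⟨hz j, ?_⟩
  have hsum1 : ∑ j, z j = ∑ j, y j := by simpa using hsum 1 le_rfl hk
  exact hsum1 ▸ Finset.single_le_sum (fun j _ => hz j) (Finset.mem_univ j)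

theorem exists_nonneg_sum_pow_eq_ncard_range_le {ι : Type*} [Fintype ι] {k : ℕ} (hk : 1 ≤ k)
    (y : ι → ℝ) (hy : ∀ j, 0 ≤ y j) :
    ∃ z : ι → ℝ, (∀ j, 0 ≤ z j) ∧ (∀ p, 1 ≤ p → p ≤ k → ∑ j, z j ^ p = ∑ j, y j ^ p) ∧
      (Set.range z).ncard ≤ k := by
  obtain ⟨z, ⟨hz, hzsum⟩, hmax⟩ := (isCompact_nonneg_sum_pow_eq hk y).exists_isMaxOn
    ⟨y, hy, fun _ _ _ => rfl⟩
    (f := fun z => (-1) ^ k * ∑ j, z j ^ (k + 1)) (by fun_prop)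
  refine ⟨z, hz, hzsum, not_lt.1 fun hlt => ?_⟩
  obtain ⟨z', hz', hsum', hgt⟩ := exists_nonneg_sum_pow_eq_of_lt_ncard_range z hz hlt
  exact (hmax ⟨hz', fun p hp hpk => (hsum' p hp hpk).trans (hzsum p hp hpk)⟩).not_gt hgt

theorem memStratumDn_of_ncard_range_abs_le {n k : ℕ} {x : Fin n → ℝ}
    (h : (Set.range fun i => |x i|).ncard ≤ k) : memStratumDn k x := by
  have hsub : (fun i => |x i|) '' {i | x i ≠ 0} ⊆ (Set.range fun i => |x i|) \ {0} := by
    rintro _ ⟨i, hi, rfl⟩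
    exact ⟨⟨i, rfl⟩, abs_ne_zero.2 hi⟩
  have hle := Set.ncard_le_ncard hsub
  by_cases hzero : {i | x i = 0}.ncard = 1
  · obtain ⟨i, hi⟩ := Set.nonempty_of_ncard_ne_zero (hzero ▸ one_ne_zero)
    rw [Set.ncard_sdiff_singleton_of_mem (Set.mem_range.2 ⟨i, by simp [show x i = 0 from hi]⟩)]
      at hle
    exact .inl ⟨hzero, by omega⟩
  · exact .inr ⟨hzero, hle.trans ((Set.ncard_le_ncard Set.sdiff_subset).trans h)⟩

theorem MvPolynomial.eval_eq_eval_of_mem_adjoin {σ R : Type*} [CommRing R]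
    {S : Set (MvPolynomial σ R)} {x y : σ → R} (h : ∀ p ∈ S, eval x p = eval y p)
    {f : MvPolynomial σ R} (hf : f ∈ Algebra.adjoin R S) : eval x f = eval y f := by
  have := Algebra.adjoin_le (S := AlgHom.equalizer (MvPolynomial.aeval x) (MvPolynomial.aeval y))
    (fun p hp => by simpa [MvPolynomial.coe_aeval_eq_eval] using h p hp) hf
  simpa [MvPolynomial.coe_aeval_eq_eval] using this

theorem Bn_sparse_meets_Dn_stratum_general
    (n : ℕ) (k : ℕ) (hk1 : 1 ≤ k)
    (m : ℕ) (f : Fin m → MvPolynomial (Fin n) ℝ)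
    (hf : ∀ j, f j ∈ Algebra.adjoin ℝ
      {p : MvPolynomial (Fin n) ℝ | ∃ i, 1 ≤ i ∧ i ≤ k ∧ p = psum (Fin n) ℝ (2 * i)})
    (hX : ∃ x : Fin n → ℝ, ∀ j, eval x (f j) = 0) :
    ∃ x : Fin n → ℝ, (∀ j, eval x (f j) = 0) ∧ memStratumDn k x := by
  obtain ⟨x, hx⟩ := hX
  obtain ⟨z, hz, hsum, hcard⟩ :=
    exists_nonneg_sum_pow_eq_ncard_range_le hk1 (fun j => x j ^ 2) fun j => sq_nonneg _
  refine ⟨fun j => √(z j), fun j => ?_, memStratumDn_of_ncard_range_abs_le ?_⟩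
  · rw [← hx j]
    refine eval_eq_eval_of_mem_adjoin ?_ (hf j)
    rintro _ ⟨i, hi, hik, rfl⟩
    simp [psum, pow_mul, Real.sq_sqrt (hz _), hsum i hi hik]
  · calc (Set.range fun j => |√(z j)|).ncard = (Real.sqrt '' Set.range z).ncard := by
          simp_rw [abs_of_nonneg (Real.sqrt_nonneg _), ← Set.range_comp, Function.comp_def]
      _ ≤ (Set.range z).ncard := Set.ncard_image_le (Set.toFinite _)
      _ ≤ k := hcard

/-- Corollary 2.6: for `1 ≤ k ≤ n-2`, every nonempty `Bₙ`-invariant `k`-sparse real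
variety (defined by polynomials in the even power sums `s₂, …, s_{2k}`) meets the
finer stratum `H_k(Dₙ)`. -/
theorem Bn_sparse_meets_Dn_stratum
    (n : ℕ) (hn : 3 ≤ n) (k : ℕ) (hk1 : 1 ≤ k) (hkn : k ≤ n - 2)
    (m : ℕ) (f : Fin m → MvPolynomial (Fin n) ℝ)
    (hf : ∀ j, f j ∈ Algebra.adjoin ℝ
      {p : MvPolynomial (Fin n) ℝ | ∃ i, 1 ≤ i ∧ i ≤ k ∧ p = psum (Fin n) ℝ (2 * i)})
    (hX : ∃ x : Fin n → ℝ, ∀ j, eval x (f j) = 0) :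
    ∃ x : Fin n → ℝ, (∀ j, eval x (f j) = 0) ∧ memStratumDn k x :=
  Bn_sparse_meets_Dn_stratum_general n k hk1 m f hf hX
end

section
/- Let n ≥ 1 and let π_1,…,π_n and π'_1,…,π'_n be two families of polynomials in ℝ[x_1,…,x_n] such that: each π_i and each π'_i is homogeneous of the same degree d_i, with d_1 ≤ d_2 ≤ ⋯ ≤ d_n; each family is algebraically independent over ℝ; and the ℝ-subalgebras of ℝ[x_1,…,x_n] generated by {π_1,…,π_n} and by {π'_1,…,π'_n} coincide. Let 1 ≤ k < n be such that d_{k+1} > d_k. Then (i) the ℝ-subalgebra generated by π_1,…,π_k equals the ℝ-subalgebra generated by π'_1,…,π'_k, and (ii) for every point p ∈ ℝ^n, the k × n Jacobian matrices (∂π_i/∂x_j(p))_{1≤i≤k, 1≤j≤n} and (∂π'_i/∂x_j(p))_{1≤i≤k, 1≤j≤n} have the same rank. -/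
open MvPolynomial

/-!
Evaluating a polynomial `F` at polynomials `π i` homogeneous of degrees `d i` turns the
`d`-weighted homogeneous components of `F` into the homogeneous components of `aeval π F`.
Hence a homogeneous element of degree `e` of the algebra generated by the `π i` is already a
polynomial in those `π i` with `d i ≤ e`. When `d_k < d_{k+1}`, this applies to each of the first
`k` members of one family with respect to the other, which gives the equality of the subalgebras.
The Jacobian of the first `k` members of one family is then a `k × k` matrix times that of the
other (chain rule), so the two ranks bound each other.
-/

namespace MvPolynomial

section Homogeneous

variable {R σ ι : Type*} [CommSemiring R] {π : ι → MvPolynomial σ R} {d : ι → ℕ}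

theorem isHomogeneous_aeval_monomial (hπ : ∀ i, (π i).IsHomogeneous (d i))
    (v : ι →₀ ℕ) (c : R) : (aeval π (monomial v c)).IsHomogeneous (Finsupp.weight d v) := by
  rw [aeval_monomial, algebraMap_eq, Finsupp.weight_apply, Finsupp.prod, Finsupp.sum]
  refine IsHomogeneous.C_mul (IsHomogeneous.prod _ _ _ fun i _ => ?_) c
  simpa [mul_comm] using (hπ i).pow (v i)

theorem homogeneousComponent_aeval (hπ : ∀ i, (π i).IsHomogeneous (d i)) (e : ℕ)
    (F : MvPolynomial ι R) :
    homogeneousComponent e (aeval π F) = aeval π (weightedHomogeneousComponent d e F) := by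
  classical
  induction F using MvPolynomial.induction_on' with
  | monomial v c =>
    rw [homogeneousComponent_of_mem (isHomogeneous_aeval_monomial hπ v c),
      weightedHomogeneousComponent_of_mem (isWeightedHomogeneous_monomial d v c rfl)]
    split_ifs <;> simp
  | add F G hF hG => simp only [map_add, hF, hG]

theorem IsWeightedHomogeneous.mem_supported {F : MvPolynomial ι R} {e : ℕ}
    (hF : F.IsWeightedHomogeneous d e) : F ∈ supported R {i | d i ≤ e} := by
  rw [_root_.MvPolynomial.mem_supported]
  intro i hi
  obtain ⟨v, hv, hiv⟩ := (mem_vars_iff_mem_support i).mp hi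
  exact hF (mem_support_iff.mp hv) ▸
    Finsupp.le_weight_of_ne_zero' d (Finsupp.mem_support_iff.mp hiv)

theorem aeval_mem_adjoin_image {F : MvPolynomial ι R} {s : Set ι} (hF : F ∈ supported R s) :
    aeval π F ∈ Algebra.adjoin R (π '' s) := by
  rw [supported_eq_adjoin_X] at hF
  have h : aeval π F ∈ (Algebra.adjoin R (X '' s)).map (aeval π) :=
    Subalgebra.mem_map.mpr ⟨F, hF, rfl⟩
  have hπX : aeval π ∘ (X : ι → MvPolynomial ι R) = π := _root_.funext (aeval_X π)
  rwa [← Algebra.adjoin_image, ← Set.image_comp, hπX] at h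

theorem mem_adjoin_image_of_isHomogeneous (hπ : ∀ i, (π i).IsHomogeneous (d i))
    {q : MvPolynomial σ R} {e : ℕ} (hq : q.IsHomogeneous e)
    (hmem : q ∈ Algebra.adjoin R (Set.range π)) :
    q ∈ Algebra.adjoin R (π '' {i | d i ≤ e}) := by
  rw [Algebra.adjoin_range_eq_range_aeval] at hmem
  obtain ⟨F, rfl⟩ := (AlgHom.mem_range _).mp hmem
  rw [← homogeneousComponent_eq_self hq, homogeneousComponent_aeval hπ]
  exact aeval_mem_adjoin_image
    (weightedHomogeneousComponent_isWeightedHomogeneous e F).mem_supported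

theorem adjoin_image_le_of_isHomogeneous {π' : ι → MvPolynomial σ R}
    (hπ : ∀ i, (π i).IsHomogeneous (d i)) (hπ' : ∀ i, (π' i).IsHomogeneous (d i))
    (hle : Algebra.adjoin R (Set.range π) ≤ Algebra.adjoin R (Set.range π'))
    {s : Set ι} (hs : ∀ i ∈ s, ∀ j, d j ≤ d i → j ∈ s) :
    Algebra.adjoin R (π '' s) ≤ Algebra.adjoin R (π' '' s) := by
  refine Algebra.adjoin_le (Set.image_subset_iff.mpr fun i hi => ?_)
  have hmem := hle (Algebra.subset_adjoin (Set.mem_range_self i))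
  exact Algebra.adjoin_mono (Set.image_mono fun j hj => hs i hi j hj)
    (mem_adjoin_image_of_isHomogeneous hπ' (hπ i) hmem)

end Homogeneous

section Jacobian

variable {R σ ι κ : Type*}

theorem pderiv_aeval [CommSemiring R] [Fintype κ] (g : κ → MvPolynomial σ R) (j : σ)
    (G : MvPolynomial κ R) :
    pderiv j (aeval g G) = ∑ l, aeval g (pderiv l G) * pderiv j (g l) := by
  classical
  induction G using MvPolynomial.induction_on with
  | C a => simp
  | add G H hG hH => simp only [map_add, hG, hH, add_mul, Finset.sum_add_distrib]
  | mul_X G i hG =>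
    simp only [map_mul, aeval_X, pderiv_mul, hG, map_add, add_mul, Finset.sum_mul,
      Finset.sum_add_distrib, pderiv_X, Pi.single_apply, mul_ite, mul_one, mul_zero,
      apply_ite (aeval g), ite_mul, zero_mul, map_zero, Finset.sum_ite_eq, Finset.mem_univ,
      if_true]
    congr 1
    exact Finset.sum_congr rfl fun l _ => by ring

noncomputable def jacobianMatrixAt [CommSemiring R] (f : ι → MvPolynomial σ R) (p : σ → R) :
    Matrix ι σ R :=
  Matrix.of fun i j => eval p (pderiv j (f i))

theorem jacobianMatrixAt_aeval [CommSemiring R] [Fintype κ] (g : κ → MvPolynomial σ R)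
    (G : ι → MvPolynomial κ R) (p : σ → R) :
    jacobianMatrixAt (fun i => aeval g (G i)) p =
      Matrix.of (fun i l => eval p (aeval g (pderiv l (G i)))) * jacobianMatrixAt g p := by
  ext i j
  simp only [jacobianMatrixAt, Matrix.of_apply, Matrix.mul_apply, pderiv_aeval, map_sum, map_mul]

theorem rank_jacobianMatrixAt_le [CommRing R] [StrongRankCondition R] [Fintype σ] [Fintype κ]
    {f : ι → MvPolynomial σ R} {g : κ → MvPolynomial σ R}
    (hfg : ∀ i, f i ∈ Algebra.adjoin R (Set.range g)) (p : σ → R) :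
    (jacobianMatrixAt f p).rank ≤ (jacobianMatrixAt g p).rank := by
  simp only [Algebra.adjoin_range_eq_range_aeval, AlgHom.mem_range] at hfg
  choose G hG using hfg
  obtain rfl : f = fun i => aeval g (G i) := _root_.funext fun i => (hG i).symm
  rw [jacobianMatrixAt_aeval]
  exact Matrix.rank_mul_le_right _ _

end Jacobian

end MvPolynomial

/-- Lemma 2.2: independence of the choice of basic invariants. If `π₁,…,πₙ` and
`π'₁,…,π'ₙ` are two families of homogeneous polynomials of the same (weakly
increasing) degrees `d₁ ≤ … ≤ dₙ`, each algebraically independent over `ℝ`,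
generating the same `ℝ`-subalgebra, and `1 ≤ k < n` is such that `d_{k+1} > d_k`,
then the subalgebras generated by the first `k` members of each family coincide,
and for every point `p ∈ ℝⁿ` the `k × n` Jacobian matrices of the two families at
`p` have the same rank. (Indices are 0-based: `π i` is `π_{i+1}`.) -/
theorem basic_invariants_independence
    (n : ℕ)
    (π π' : Fin n → MvPolynomial (Fin n) ℝ) (d : Fin n → ℕ)
    (hd : Monotone d)
    (hπ : ∀ i, (π i).IsHomogeneous (d i)) (hπ' : ∀ i, (π' i).IsHomogeneous (d i))
    (hadj : Algebra.adjoin ℝ (Set.range π) = Algebra.adjoin ℝ (Set.range π'))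
    (k : ℕ) (hkn : k < n)
    (hdeg : d ⟨k - 1, by omega⟩ < d ⟨k, hkn⟩) :
    Algebra.adjoin ℝ {p | ∃ i : Fin n, (i : ℕ) < k ∧ p = π i} =
      Algebra.adjoin ℝ {p | ∃ i : Fin n, (i : ℕ) < k ∧ p = π' i} ∧
    ∀ p : Fin n → ℝ,
      (Matrix.of fun (i : Fin k) (j : Fin n) =>
          eval p (pderiv j (π (Fin.castLE hkn.le i)))).rank =
      (Matrix.of fun (i : Fin k) (j : Fin n) =>
          eval p (pderiv j (π' (Fin.castLE hkn.le i)))).rank := by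
  have hs : ∀ i ∈ {i : Fin n | (i : ℕ) < k}, ∀ j, d j ≤ d i →
      j ∈ {i : Fin n | (i : ℕ) < k} := by
    intro i (hi : (i : ℕ) < k) j hji
    by_contra hj
    have hik : d i ≤ d ⟨k - 1, by omega⟩ := hd (show (i : ℕ) ≤ k - 1 by omega)
    have hkj : d ⟨k, hkn⟩ ≤ d j := hd (show k ≤ (j : ℕ) from not_lt.mp hj)
    omega
  have hset (f : Fin n → MvPolynomial (Fin n) ℝ) :
      {p | ∃ i : Fin n, (i : ℕ) < k ∧ p = f i} =
        Set.range (fun i : Fin k => f (Fin.castLE hkn.le i)) := by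
    rw [Set.range_comp' f, Fin.range_castLE]
    ext p
    simp [eq_comm]
  have hfirst := le_antisymm (adjoin_image_le_of_isHomogeneous hπ hπ' hadj.le hs)
    (adjoin_image_le_of_isHomogeneous hπ' hπ hadj.ge hs)
  rw [← Fin.range_castLE hkn.le, ← Set.range_comp, ← Set.range_comp] at hfirst
  rw [hset, hset]
  refine ⟨hfirst, fun p => le_antisymm ?_ ?_⟩
  · exact rank_jacobianMatrixAt_le (fun i => hfirst ▸ Algebra.subset_adjoin ⟨i, rfl⟩) p
  · exact rank_jacobianMatrixAt_le (fun i => hfirst ▸ Algebra.subset_adjoin ⟨i, rfl⟩) p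
end

section
/- Let n, m ≥ 1 and let π : ℝ^n → ℝ^m be a continuous map whose first coordinate function is π_1(x) = ‖x‖² = x_1² + ⋯ + x_n². If L ⊆ ℝ^m is a nonempty affine subspace with L ⊆ π(ℝ^n), then L consists of a single point. In particular, the image π(ℝ^n) contains no affine line. -/
/-!
The first coordinate `‖x‖²` of `π` is nonnegative on `L`, and an affine function that is
bounded below on an affine subspace is constant on it, say equal to `c`. Hence `L` lies in the
image under `π` of the compact set `{x | ‖x‖² ≤ c}`, so `L` is bounded. A bounded affine
subspace is a single point, because its direction lies in its asymptotic cone, which is trivial.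
-/

open Bornology

theorem AffineMap.apply_eq_apply_of_bddBelow_image {k V P : Type*} [Field k] [LinearOrder k]
    [IsStrictOrderedRing k] [AddCommGroup V] [Module k V] [AddTorsor V P]
    {f : P →ᵃ[k] k} {s : AffineSubspace k P} (hf : BddBelow (f '' s)) {p q : P}
    (hp : p ∈ s) (hq : q ∈ s) : f p = f q := by
  obtain ⟨c, hc⟩ := hf
  set a := f.linear (q -ᵥ p)
  have hline : ∀ t : k, c ≤ t * a + f p := fun t => by
    have hmem : t • (q -ᵥ p) +ᵥ p ∈ s :=
      s.vadd_mem_of_mem_direction (s.direction.smul_mem t (s.vsub_mem_direction hq hp)) hp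
    simpa [a, f.map_vadd] using hc (Set.mem_image_of_mem f hmem)
  have ha : a = 0 := by
    by_contra ha
    have := hline ((c - f p - 1) / a)
    rw [div_mul_cancel₀ _ ha] at this
    linarith
  calc f p = a + f p := by rw [ha, zero_add]
    _ = f q := by rw [← vadd_eq_add, ← f.map_vadd, vsub_vadd]

theorem AffineSubspace.subsingleton_of_isBounded {V P : Type*} [NormedAddCommGroup V]
    [NormedSpace ℝ V] [MetricSpace P] [NormedAddTorsor V P] {s : AffineSubspace ℝ P}
    (hs : IsBounded (s : Set P)) : (s : Set P).Subsingleton := by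
  rcases s.eq_bot_or_nonempty with rfl | hne
  · simp
  rw [← vectorSpan_eq_bot_iff_subsingleton (k := ℝ), ← AffineSubspace.direction_eq_vectorSpan,
    eq_bot_iff]
  intro v hv
  apply asymptoticCone_subset_singleton_of_bounded hs
  rw [asymptoticCone_affineSubspace hne]
  exact subset_closure hv

theorem isCompact_setOf_sum_sq_le {ι : Type*} [Fintype ι] (c : ℝ) :
    IsCompact {x : ι → ℝ | ∑ i, x i ^ 2 ≤ c} := by
  refine (isCompact_univ_pi fun _ => isCompact_Icc (a := -√c) (b := √c)).of_isClosed_subset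
    (isClosed_le (by fun_prop) continuous_const) fun x hx i _ => ?_
  exact abs_le.mp (Real.abs_le_sqrt ((Finset.single_le_sum (fun j _ => sq_nonneg (x j))
    (Finset.mem_univ i)).trans hx))

theorem orbit_space_line_free_general
    (n m : ℕ) (hm : 1 ≤ m)
    (π : (Fin n → ℝ) → (Fin m → ℝ)) (hcont : Continuous π)
    (hπ1 : ∀ x, π x ⟨0, hm⟩ = ∑ i, (x i) ^ 2)
    (L : AffineSubspace ℝ (Fin m → ℝ)) (hL : (L : Set (Fin m → ℝ)).Nonempty)
    (hLsub : (L : Set (Fin m → ℝ)) ⊆ Set.range π) :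
    ∃ p, (L : Set (Fin m → ℝ)) = {p} := by
  obtain ⟨p, hp⟩ := hL
  let firstCoord : (Fin m → ℝ) →ᵃ[ℝ] ℝ := (LinearMap.proj ⟨0, hm⟩).toAffineMap
  have hfirst : ∀ x, firstCoord (π x) = ∑ i, x i ^ 2 := hπ1
  have hbddBelow : BddBelow (firstCoord '' L) := ⟨0, by
    rintro _ ⟨_, hq, rfl⟩
    obtain ⟨x, rfl⟩ := hLsub hq
    rw [hfirst]
    positivity⟩
  have hbdd : IsBounded (L : Set (Fin m → ℝ)) := by
    refine ((isCompact_setOf_sum_sq_le (p ⟨0, hm⟩)).image hcont).isBounded.subset fun q hq => ?_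
    obtain ⟨x, rfl⟩ := hLsub hq
    have hconst := firstCoord.apply_eq_apply_of_bddBelow_image hbddBelow hq hp
    exact ⟨x, (hfirst x ▸ hconst).le, rfl⟩
  exact ⟨p, (L.subsingleton_of_isBounded hbdd).eq_singleton_of_mem hp⟩

/-- Lemma 3.3 (generalized): if `π : ℝⁿ → ℝᵐ` is a continuous map whose first
coordinate function is `x ↦ ‖x‖² = x₁² + ⋯ + xₙ²`, then any nonempty affine
subspace `L ⊆ ℝᵐ` contained in the image of `π` is a single point; in particular
the image contains no affine line. -/
theorem orbit_space_line_free
    (n m : ℕ) (hn : 1 ≤ n) (hm : 1 ≤ m)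
    (π : (Fin n → ℝ) → (Fin m → ℝ)) (hcont : Continuous π)
    (hπ1 : ∀ x, π x ⟨0, hm⟩ = ∑ i, (x i) ^ 2)
    (L : AffineSubspace ℝ (Fin m → ℝ)) (hL : (L : Set (Fin m → ℝ)).Nonempty)
    (hLsub : (L : Set (Fin m → ℝ)) ⊆ Set.range π) :
    ∃ p, (L : Set (Fin m → ℝ)) = {p} :=
  orbit_space_line_free_general n m hm π hcont hπ1 L hL hLsub
end

section
/- Let n ≥ 2. Define polynomials π_1,…,π_n ∈ ℝ[x_1,…,x_n] by π_i = s_{2i} for 1 ≤ i ≤ ⌊n/2⌋, π_{⌊n/2⌋+1} = e_n = x_1⋯x_n, and π_i = s_{2i−2} for ⌊n/2⌋+1 < i ≤ n. Fix 1 ≤ j ≤ n and let f_1,…,f_m ∈ ℝ[x_1,…,x_n] be polynomials each belonging to the ℝ-subalgebra generated by {π_i : 1 ≤ i ≤ n, i ≠ j}. If the real variety X = {x ∈ ℝ^n : f_1(x) = ⋯ = f_m(x) = 0} is nonempty, then there exists x ∈ X with |x_i| = |x_{i'}| for some indices i ≠ i'. -/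
open MvPolynomial

/-- The basic invariants `π₁, …, πₙ` of the reflection group `Dₙ` (equation (2.2)):
`πᵢ = s_{2i}` for `1 ≤ i ≤ ⌊n/2⌋`, `π_{⌊n/2⌋+1} = eₙ = x₁⋯xₙ`, and
`πᵢ = s_{2i-2}` for `⌊n/2⌋+1 < i ≤ n`. -/
noncomputable def basicInvariantDn (n i : ℕ) : MvPolynomial (Fin n) ℝ :=
  if i ≤ n / 2 then psum (Fin n) ℝ (2 * i)
  else if i = n / 2 + 1 then ∏ j, X j
  else psum (Fin n) ℝ (2 * i - 2)

/-!
Every `f_l` is a polynomial in the `πᵢ` with `i ≠ j`, so it is constant on the fiber `F` through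
a point `x ∈ X` of the map `(πᵢ)_{i ≠ j}`, and `F ⊆ X`. For `n = 2`, `j = 1` the fiber is a
hyperbola `x₁ x₂ = c`, which contains a point with `|x₁| = |x₂|`. Otherwise some `πᵢ`, `i ≠ j`,
is a power sum `s_{2k}` with `k ≥ 1`, so `F` is compact and `π_j` attains its maximum on `F` at
some `w`. By the Lagrange multiplier rule the gradients of `π₁, …, πₙ` are linearly dependent at
`w`. Off the arrangement they are not: the Jacobian rows `w_i^{2k-1}` and `∏_{l ≠ i} w_l` turn a
kernel vector into the solution of a Vandermonde system in the distinct nodes `w_i²`.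
-/

theorem eq_zero_of_forall_lt_card_sum_mul_pow_eq_zero {R ι : Type*} [CommRing R] [IsDomain R]
    [Fintype ι] {t u : ι → R} (ht : Function.Injective t)
    (h : ∀ k < Fintype.card ι, ∑ i, u i * t i ^ k = 0) : u = 0 := by
  set e := Fintype.equivFin ι
  have hv : u ∘ e.symm = 0 :=
    Matrix.eq_zero_of_forall_pow_sum_mul_pow_eq_zero (ht.comp e.symm.injective) fun k => by
      simpa only [Function.comp_apply, e.symm.sum_comp fun i => u i * t i ^ (k : ℕ)] using
        h k k.isLt
  funext i
  simpa using congrFun hv (e i)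

/-- The Jacobian of `(s₂, s₄, …, s_{2n-2}, eₙ)` at `w` (power rows divided by `2k`) has trivial
kernel when the `w i ^ 2` are distinct. -/
theorem eq_zero_of_sum_prod_erase_mul_eq_zero_of_sum_pow_mul_eq_zero {K ι : Type*} [Field K]
    [Fintype ι] [DecidableEq ι] {w v : ι → K} (hw : Function.Injective fun i => w i ^ 2)
    (hprod : ∑ i, (∏ l ∈ Finset.univ.erase i, w l) * v i = 0)
    (hpow : ∀ k, 1 ≤ k → k < Fintype.card ι → ∑ i, w i ^ (2 * k - 1) * v i = 0) : v = 0 := by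
  by_cases hz : ∃ i₀, w i₀ = 0
  · obtain ⟨i₀, hi₀⟩ := hz
    have hne : ∀ i ≠ i₀, w i ≠ 0 := fun i hi h => hi (hw (by simp [h, hi₀]))
    have hv₀ : v i₀ = 0 := by
      rw [Finset.sum_eq_single i₀ (fun i _ hi => by
        rw [Finset.prod_eq_zero (Finset.mem_erase.2 ⟨Ne.symm hi, Finset.mem_univ _⟩) hi₀, zero_mul])
        (by simp)] at hprod
      exact (mul_eq_zero.1 hprod).resolve_left
        (Finset.prod_ne_zero_iff.2 fun l hl => hne l (Finset.ne_of_mem_erase hl))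
    -- the power rows form a Vandermonde system in `w i * v i` at the nodes `w i ^ 2`, `i ≠ i₀`
    have hwv : (fun i : {i // i ≠ i₀} => w i * v i) = 0 := by
      refine eq_zero_of_forall_lt_card_sum_mul_pow_eq_zero (t := fun i : {i // i ≠ i₀} => w i ^ 2)
        (hw.comp Subtype.val_injective) fun k hk => ?_
      simp only [Fintype.card_subtype_compl, Fintype.card_unique] at hk
      have := hpow (k + 1) (by omega) (by omega)
      rw [Fintype.sum_eq_add_sum_subtype_ne _ i₀, hv₀, mul_zero, zero_add] at this
      rw [← this]
      refine Finset.sum_congr rfl fun i _ => ?_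
      rw [show 2 * (k + 1) - 1 = 2 * k + 1 by omega]
      ring
    funext i
    by_cases hi : i = i₀
    · rw [hi, hv₀, Pi.zero_apply]
    · exact (mul_eq_zero.1 (congrFun hwv ⟨i, hi⟩)).resolve_left (hne i hi)
  · push Not at hz
    -- the product row, divided by `∏ l, w l`, is the missing zeroth power row for `v i / w i`
    have hu : (fun i => v i / w i) = 0 := by
      refine eq_zero_of_forall_lt_card_sum_mul_pow_eq_zero hw fun k hk => ?_
      rcases Nat.eq_zero_or_pos k with rfl | hk0
      · have : (∏ l, w l) * ∑ i, v i / w i = 0 := by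
          rw [← hprod, Finset.mul_sum]
          refine Finset.sum_congr rfl fun i _ => ?_
          rw [← Finset.prod_erase_mul _ _ (Finset.mem_univ i)]
          field_simp [hz i]
        simpa [Finset.prod_ne_zero_iff.2 fun l _ => hz l] using this
      · rw [← hpow k hk0 hk]
        refine Finset.sum_congr rfl fun i _ => ?_
        have hsq : (w i ^ 2) ^ k = w i ^ (2 * k - 1) * w i := by
          rw [← pow_mul, ← pow_succ, Nat.sub_add_cancel (by omega)]
        rw [hsq]
        field_simp [hz i]
    funext i
    simpa [hz i] using congrFun hu i

section Derivative

variable {𝕜 σ : Type*} [NontriviallyNormedField 𝕜] [Fintype σ]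

theorem fderiv_eval_psum_apply (N : ℕ) (w v : σ → 𝕜) :
    fderiv 𝕜 (fun x => eval x (psum σ 𝕜 N)) w v = ∑ i, N * w i ^ (N - 1) * v i := by
  have h := HasFDerivAt.fun_sum (u := Finset.univ) (A := fun i (x : σ → 𝕜) => x i ^ N)
    fun i _ => (hasFDerivAt_apply (𝕜 := 𝕜) i w).pow N
  simp only [psum, map_sum, map_pow, eval_X, h.fderiv]
  simp [mul_comm]

theorem fderiv_eval_prod_X_apply [DecidableEq σ] (w v : σ → 𝕜) :
    fderiv 𝕜 (fun x => eval x (∏ i, X i : MvPolynomial σ 𝕜)) w v =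
      ∑ i, (∏ l ∈ Finset.univ.erase i, w l) * v i := by
  have h := HasFDerivAt.finsetProd (u := Finset.univ) (g := fun i (x : σ → 𝕜) => x i)
    fun i _ => hasFDerivAt_apply (𝕜 := 𝕜) i w
  simp only [map_prod, eval_X, h.fderiv]
  simp

end Derivative

theorem linearIndependent_of_forall_apply_eq_zero {𝕜 ι : Type*} [NontriviallyNormedField 𝕜]
    [Fintype ι] [DecidableEq ι] {g' : ι → StrongDual 𝕜 (ι → 𝕜)}
    (h : ∀ v, (∀ i, g' i v = 0) → v = 0) : LinearIndependent 𝕜 g' := by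
  let L : (ι → 𝕜) →ₗ[𝕜] ι → 𝕜 := LinearMap.pi fun i => (g' i : (ι → 𝕜) →ₗ[𝕜] 𝕜)
  have hL : Function.Surjective L := LinearMap.injective_iff_surjective.1 <|
    (injective_iff_map_eq_zero L).2 fun v hv => h v fun i => congrFun hv i
  rw [Fintype.linearIndependent_iff]
  intro c hc i
  obtain ⟨v, hv⟩ := hL (Pi.single i 1)
  have := congrArg (fun φ : StrongDual 𝕜 (ι → 𝕜) => φ v) hc
  have hvk (k : ι) : g' k v = (Pi.single i 1 : ι → 𝕜) k := congrFun hv k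
  simpa [hvk, Pi.single_apply] using this

theorem not_isLocalExtrOn_of_linearIndependent {E ι : Type*} [NormedAddCommGroup E]
    [NormedSpace ℝ E] [CompleteSpace E] [Finite ι] [DecidableEq ι] {g : ι → E → ℝ}
    {g' : ι → StrongDual ℝ E} {w : E} (hg : ∀ i, HasStrictFDerivAt (g i) (g' i) w)
    (hli : LinearIndependent ℝ g') (j : ι) :
    ¬ IsLocalExtrOn (g j) {x | ∀ i ≠ j, g i x = g i w} w := by
  intro hextr
  refine IsLocalExtrOn.linear_dependent_of_hasStrictFDerivAt (f := fun i : {i // i ≠ j} => g i)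
    (by simpa only [Subtype.forall] using hextr) (fun i => hg i) (hg j) ?_
  convert hli.comp _ (Equiv.optionSubtypeNe j).injective
  funext o
  cases o <;> rfl

theorem isBounded_setOf_sum_pow_eq {ι : Type*} [Fintype ι] {k : ℕ} (hk : k ≠ 0) (c : ℝ) :
    Bornology.IsBounded {x : ι → ℝ | ∑ i, x i ^ (2 * k) = c} := by
  refine (Metric.isBounded_iff_subset_closedBall 0).2 ⟨max 1 c, fun x hx => ?_⟩
  rw [mem_closedBall_zero_iff, pi_norm_le_iff_of_nonneg (le_max_of_le_left zero_le_one)]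
  intro i
  have hle : |x i| ^ (2 * k) ≤ c := by
    rw [← hx, pow_abs, abs_of_nonneg ((even_two_mul k).pow_nonneg _)]
    exact Finset.single_le_sum (fun l _ => (even_two_mul k).pow_nonneg (x l)) (Finset.mem_univ i)
  rw [Real.norm_eq_abs]
  rcases le_or_gt |x i| 1 with h | h
  · exact le_max_of_le_left h
  · exact le_max_of_le_right ((le_self_pow₀ h.le (by omega)).trans hle)

theorem MvPolynomial.eval_eq_of_mem_adjoin {R σ : Type*} [CommSemiring R]
    {S : Set (MvPolynomial σ R)} {x y : σ → R} (h : ∀ p ∈ S, eval x p = eval y p)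
    {p : MvPolynomial σ R} (hp : p ∈ Algebra.adjoin R S) : eval x p = eval y p :=
  (AlgHom.eqOn_adjoin_iff (φ := aeval x) (ψ := aeval y)).2 h hp

theorem exists_mul_eq_and_abs_eq (c : ℝ) : ∃ a b : ℝ, a * b = c ∧ |a| = |b| := by
  rcases le_or_gt 0 c with hc | hc
  · exact ⟨√c, √c, Real.mul_self_sqrt hc, rfl⟩
  · refine ⟨-√(-c), √(-c), ?_, abs_neg _⟩
    rw [neg_mul, Real.mul_self_sqrt (by linarith), neg_neg]

theorem basicInvariantDn_half_succ (n : ℕ) : basicInvariantDn n (n / 2 + 1) = ∏ i, X i := by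
  simp [basicInvariantDn]

theorem exists_basicInvariantDn_eq_psum {n k : ℕ} (hk : 1 ≤ k) (hkn : k < n) :
    ∃ i, 1 ≤ i ∧ i ≤ n ∧ basicInvariantDn n i = psum (Fin n) ℝ (2 * k) := by
  by_cases hkh : k ≤ n / 2
  · exact ⟨k, hk, hkn.le, by simp [basicInvariantDn, hkh]⟩
  · refine ⟨k + 1, by omega, hkn, ?_⟩
    rw [basicInvariantDn, if_neg (by omega), if_neg (by omega),
      show 2 * (k + 1) - 2 = 2 * k by omega]

theorem basicInvariantDn_eq_psum_of_ne {n i : ℕ} (hi : 1 ≤ i) (hin : i ≠ n / 2 + 1) :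
    ∃ k, k ≠ 0 ∧ basicInvariantDn n i = psum (Fin n) ℝ (2 * k) := by
  by_cases hih : i ≤ n / 2
  · exact ⟨i, by omega, by simp [basicInvariantDn, hih]⟩
  · refine ⟨i - 1, by omega, ?_⟩
    rw [basicInvariantDn, if_neg hih, if_neg hin, show 2 * i - 2 = 2 * (i - 1) by omega]

theorem linearIndependent_fderiv_eval_basicInvariantDn {n : ℕ} {w : Fin n → ℝ}
    (hw : ∀ i i', i ≠ i' → |w i| ≠ |w i'|) :
    LinearIndependent ℝ fun a : Fin n =>
      fderiv ℝ (fun x => eval x (basicInvariantDn n (a + 1))) w := by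
  rcases Nat.eq_zero_or_pos n with rfl | hn
  · exact linearIndependent_empty_type
  refine linearIndependent_of_forall_apply_eq_zero fun v hv => ?_
  refine eq_zero_of_sum_prod_erase_mul_eq_zero_of_sum_pow_mul_eq_zero
    (fun i i' h => not_not.1 fun hne => hw i i' hne ((sq_eq_sq_iff_abs_eq_abs _ _).1 h)) ?_ ?_
  · simpa only [basicInvariantDn_half_succ, fderiv_eval_prod_X_apply] using hv ⟨n / 2, by omega⟩
  · intro k hk hkn
    obtain ⟨i, hi, hin, hik⟩ := exists_basicInvariantDn_eq_psum hk (by simpa using hkn)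
    have := hv ⟨i - 1, by omega⟩
    simp only [Nat.sub_add_cancel hi, hik, fderiv_eval_psum_apply, mul_assoc,
      ← Finset.mul_sum] at this
    exact (mul_eq_zero.1 this).resolve_left (by norm_cast; omega)

def invariantFiberDn (n j : ℕ) (x : Fin n → ℝ) : Set (Fin n → ℝ) :=
  {z | ∀ i, 1 ≤ i → i ≤ n → i ≠ j →
    eval z (basicInvariantDn n i) = eval x (basicInvariantDn n i)}

theorem mem_invariantFiberDn_self (n j : ℕ) (x : Fin n → ℝ) : x ∈ invariantFiberDn n j x :=
  fun _ _ _ _ => rfl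

theorem isClosed_invariantFiberDn (n j : ℕ) (x : Fin n → ℝ) :
    IsClosed (invariantFiberDn n j x) := by
  simp only [invariantFiberDn, Set.ofPred_forall]
  exact isClosed_iInter fun i => isClosed_iInter fun _ => isClosed_iInter fun _ =>
    isClosed_iInter fun _ => isClosed_eq (continuous_eval _) continuous_const

theorem isCompact_invariantFiberDn {n j : ℕ} (hn : 2 ≤ n) (hnj : ¬(n = 2 ∧ j = 1))
    (x : Fin n → ℝ) : IsCompact (invariantFiberDn n j x) := by
  obtain ⟨i, hi, hin, hij, hih⟩ : ∃ i, 1 ≤ i ∧ i ≤ n ∧ i ≠ j ∧ i ≠ n / 2 + 1 := by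
    by_cases hj : j = 1
    · by_cases hn3 : n = 3
      · exact ⟨3, by omega, by omega, by omega, by omega⟩
      · exact ⟨2, by omega, by omega, by omega, by omega⟩
    · exact ⟨1, le_rfl, by omega, Ne.symm hj, by omega⟩
  obtain ⟨k, hk, hik⟩ := basicInvariantDn_eq_psum_of_ne (n := n) hi hih
  refine Metric.isCompact_of_isClosed_isBounded (isClosed_invariantFiberDn n j x)
    ((isBounded_setOf_sum_pow_eq hk (eval x (basicInvariantDn n i))).subset fun z hz => ?_)
  rw [Set.mem_ofPred_eq, ← hz i hi hin hij, hik]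
  simp [psum]

theorem exists_mem_invariantFiberDn_two_one_abs_eq (x : Fin 2 → ℝ) :
    ∃ z ∈ invariantFiberDn 2 1 x, ∃ i i', i ≠ i' ∧ |z i| = |z i'| := by
  obtain ⟨a, b, hab, habs⟩ := exists_mul_eq_and_abs_eq (x 0 * x 1)
  refine ⟨![a, b], fun i hi1 hi2 hi => ?_, 0, 1, by decide, habs⟩
  obtain rfl : i = 2 := by omega
  simp [basicInvariantDn, Fin.prod_univ_two, hab]

theorem exists_mem_invariantFiberDn_abs_eq {n j : ℕ} (hn : 2 ≤ n) (hj1 : 1 ≤ j) (hjn : j ≤ n)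
    (x : Fin n → ℝ) : ∃ z ∈ invariantFiberDn n j x, ∃ i i', i ≠ i' ∧ |z i| = |z i'| := by
  rcases em (n = 2 ∧ j = 1) with ⟨rfl, rfl⟩ | hnj
  · exact exists_mem_invariantFiberDn_two_one_abs_eq x
  obtain ⟨w, hw, hmax⟩ := (isCompact_invariantFiberDn hn hnj x).exists_isMaxOn
    ⟨x, mem_invariantFiberDn_self n j x⟩ (continuous_eval (basicInvariantDn n j)).continuousOn
  refine ⟨w, hw, ?_⟩
  by_contra! hdist
  obtain ⟨j, rfl⟩ : ∃ a, j = a + 1 := ⟨j - 1, by omega⟩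
  refine not_isLocalExtrOn_of_linearIndependent
    (fun a => (AnalyticOnNhd.eval_mvPolynomial _ w trivial).hasStrictFDerivAt)
    (linearIndependent_fderiv_eval_basicInvariantDn hdist) (⟨j, by omega⟩ : Fin n) ?_
  refine (hmax.on_subset fun z hz i hi hin hij => ?_).localize.isExtr
  have := hz ⟨i - 1, by omega⟩ (Fin.ne_of_val_ne (by simp; omega))
  rw [Fin.val_mk, Nat.sub_add_cancel hi] at this
  exact this.trans (hw i hi hin hij)

/-- Theorem 1.4 for type `Dₙ`: a nonempty real variety defined by polynomials in the
basic invariants of `Dₙ` omitting one, `π_j`, meets the reflection arrangement of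
`Dₙ`, i.e. contains a point two of whose coordinates have equal absolute value. -/
theorem all_but_one_Dn
    (n : ℕ) (hn : 2 ≤ n) (j : ℕ) (hj1 : 1 ≤ j) (hjn : j ≤ n)
    (m : ℕ) (f : Fin m → MvPolynomial (Fin n) ℝ)
    (hf : ∀ l, f l ∈ Algebra.adjoin ℝ
      {p : MvPolynomial (Fin n) ℝ |
        ∃ i, 1 ≤ i ∧ i ≤ n ∧ i ≠ j ∧ p = basicInvariantDn n i})
    (hX : ∃ x : Fin n → ℝ, ∀ l, eval x (f l) = 0) :
    ∃ x : Fin n → ℝ, (∀ l, eval x (f l) = 0) ∧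
      ∃ i i' : Fin n, i ≠ i' ∧ |x i| = |x i'| := by
  obtain ⟨x, hx⟩ := hX
  obtain ⟨z, hz, hzabs⟩ := exists_mem_invariantFiberDn_abs_eq hn hj1 hjn x
  refine ⟨z, fun l => ?_, hzabs⟩
  rw [eval_eq_of_mem_adjoin ?_ (hf l), hx l]
  rintro p ⟨i, hi, hin, hij, rfl⟩
  exact hz i hi hin hij
end

section
/- Let n ≥ 1 and let p ∈ ℝ^n satisfy 0 < p_1 < p_2 < ⋯ < p_n. If x ∈ ℝ^n satisfies s_{2l}(x) = s_{2l}(p) for all l = 1,…,n, then every coordinate of x is nonzero and the absolute values |x_1|,…,|x_n| are pairwise distinct. Consequently, the nonempty variety {(x, t) ∈ ℝ^n × ℝ : s_{2l}(x) = s_{2l}(p) for l = 1,…,n} is disjoint from the set of points (x,t) with x_i = 0 for some i or |x_i| = |x_{i'}| for some i ≠ i'. -/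
/-!
Newton's identities recover the elementary symmetric functions of the `x i ^ 2` from the power
sums `s_{2l}(x)`, `l ≤ n`, so `∏ (T - x i ^ 2)` and `∏ (T - p i ^ 2)` coincide and so do their
root multisets. Taking square roots, the multiset of the `|x i|` is that of the `p i`, which are
positive and pairwise distinct.
-/

open MvPolynomial Finset

theorem MvPolynomial.aeval_psum {ι R S : Type*} [Fintype ι] [CommSemiring R] [CommSemiring S]
    [Algebra R S] (f : ι → S) (k : ℕ) : aeval f (psum ι R k) = ∑ i, f i ^ k := by
  simp [psum]

section PowerSums

variable {ι R : Type*} [Fintype ι] [CommRing R] [IsDomain R] [CharZero R]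

theorem aeval_esymm_eq_of_sum_pow_eq {f g : ι → R}
    (h : ∀ l, 1 ≤ l → l ≤ Fintype.card ι → ∑ i, f i ^ l = ∑ i, g i ^ l) {k : ℕ}
    (hk : k ≤ Fintype.card ι) : aeval f (esymm ι R k) = aeval g (esymm ι R k) := by
  induction k using Nat.strong_induction_on with
  | _ k ih =>
    rcases Nat.eq_zero_or_pos k with rfl | hk0
    · simp
    have newton (v : ι → R) := congrArg (aeval v) (mul_esymm_eq_sum ι R k)
    simp only [map_mul, map_sum, map_pow, map_neg, map_one, map_natCast, aeval_psum] at newton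
    have hsum : ∑ a ∈ antidiagonal k with a.1 < k,
          (-1) ^ a.1 * aeval f (esymm ι R a.1) * ∑ i, f i ^ a.2 =
        ∑ a ∈ antidiagonal k with a.1 < k,
          (-1) ^ a.1 * aeval g (esymm ι R a.1) * ∑ i, g i ^ a.2 := by
      refine sum_congr rfl fun a ha => ?_
      obtain ⟨hak, hlt⟩ := mem_filter.mp ha
      rw [HasAntidiagonal.mem_antidiagonal] at hak
      rw [ih a.1 hlt (by omega), h a.2 (by omega) (by omega)]
    refine mul_left_cancel₀ (Nat.cast_ne_zero.mpr hk0.ne') ?_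
    rw [newton f, newton g, hsum]

theorem map_univ_eq_of_sum_pow_eq {f g : ι → R}
    (h : ∀ l, 1 ≤ l → l ≤ Fintype.card ι → ∑ i, f i ^ l = ∑ i, g i ^ l) :
    univ.val.map f = univ.val.map g := by
  have hprod : (univ.val.map f |>.map fun t => Polynomial.X - Polynomial.C t).prod =
      (univ.val.map g |>.map fun t => Polynomial.X - Polynomial.C t).prod := by
    rw [Multiset.prod_X_sub_X_eq_sum_esymm, Multiset.prod_X_sub_X_eq_sum_esymm]
    simp only [Multiset.card_map, card_val, card_univ]
    refine sum_congr rfl fun j hj => ?_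
    rw [← aeval_esymm_eq_multiset_esymm ι R, ← aeval_esymm_eq_multiset_esymm ι R,
      aeval_esymm_eq_of_sum_pow_eq h (Nat.lt_succ_iff.mp (mem_range.mp hj))]
  simpa only [Polynomial.roots_multiset_prod_X_sub_C] using congrArg Polynomial.roots hprod

end PowerSums

theorem Function.Injective.of_map_univ_eq {ι α : Type*} [Fintype ι] {f g : ι → α}
    (hg : Function.Injective g) (h : univ.val.map f = univ.val.map g) : Function.Injective f :=
  Fintype.nodup_map_univ_iff_injective.mp (h ▸ Fintype.nodup_map_univ_iff_injective.mpr hg)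

theorem map_univ_abs_eq_of_sum_pow_two_mul_eq {ι : Type*} [Fintype ι] {x p : ι → ℝ}
    (h : ∀ l, 1 ≤ l → l ≤ Fintype.card ι → ∑ i, x i ^ (2 * l) = ∑ i, p i ^ (2 * l)) :
    univ.val.map (|x ·|) = univ.val.map (|p ·|) := by
  have hsq := map_univ_eq_of_sum_pow_eq (f := (x · ^ 2)) (g := (p · ^ 2))
    fun l h1 h2 => by simpa only [← pow_mul] using h l h1 h2
  simpa only [Multiset.map_map, Function.comp_def, Real.sqrt_sq_eq_abs]
    using congrArg (Multiset.map Real.sqrt) hsq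

/-- The counterexample (3.2) showing essentiality is needed in Theorem 3.4: for
`0 < p₁ < ⋯ < pₙ`, any `x` with `s_{2l}(x) = s_{2l}(p)` for `l = 1,…,n` has all
coordinates nonzero with pairwise distinct absolute values; consequently the
(nonempty) variety `{(x,t) : s_{2l}(x) = s_{2l}(p), l = 1,…,n} ⊆ ℝⁿ × ℝ` is disjoint
from the reflection arrangement of `Bₙ`. -/
theorem non_essential_counterexample
    (n : ℕ) (hn : 1 ≤ n) (p : Fin n → ℝ)
    (hpos : 0 < p ⟨0, hn⟩) (hmono : StrictMono p) :
    (∀ x : Fin n → ℝ,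
      (∀ l, 1 ≤ l → l ≤ n → ∑ i, x i ^ (2 * l) = ∑ i, p i ^ (2 * l)) →
      (∀ i, x i ≠ 0) ∧ Function.Injective (fun i => |x i|)) ∧
    ({xt : (Fin n → ℝ) × ℝ |
        ∀ l, 1 ≤ l → l ≤ n → ∑ i, xt.1 i ^ (2 * l) = ∑ i, p i ^ (2 * l)}.Nonempty ∧
      ∀ xt : (Fin n → ℝ) × ℝ,
        (∀ l, 1 ≤ l → l ≤ n → ∑ i, xt.1 i ^ (2 * l) = ∑ i, p i ^ (2 * l)) →
        ¬((∃ i, xt.1 i = 0) ∨ ∃ i i' : Fin n, i ≠ i' ∧ |xt.1 i| = |xt.1 i'|)) := by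
  have hp_pos (i : Fin n) : 0 < p i := hpos.trans_le (hmono.monotone (Nat.zero_le i.val))
  have hp_abs : (|p ·|) = p := funext fun i => abs_of_pos (hp_pos i)
  have key (x : Fin n → ℝ) (hx : ∀ l, 1 ≤ l → l ≤ n → ∑ i, x i ^ (2 * l) = ∑ i, p i ^ (2 * l)) :
      (∀ i, x i ≠ 0) ∧ Function.Injective (fun i => |x i|) := by
    have habs : univ.val.map (|x ·|) = univ.val.map p := by
      rw [map_univ_abs_eq_of_sum_pow_two_mul_eq (by simpa only [Fintype.card_fin] using hx), hp_abs]
    refine ⟨fun i => ?_, hmono.injective.of_map_univ_eq habs⟩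
    obtain ⟨j, -, hj⟩ := Multiset.mem_map.mp (habs ▸ Multiset.mem_map_of_mem _ (mem_univ_val i))
    exact abs_pos.mp (hj ▸ hp_pos j)
  refine ⟨key, ⟨(p, 0), fun _ _ _ => rfl⟩, ?_⟩
  rintro ⟨x, _⟩ hx (⟨i, hi⟩ | ⟨i, i', hne, habs⟩)
  · exact (key x hx).1 i hi
  · exact hne ((key x hx).2 habs)
end

section
/- Let n ≥ 1 and let 0 ≤ t < k ≤ n be integers. Then there exists a point x ∈ ℝ^n such that no y ∈ ℝ^n with at most t distinct coordinates (i.e. with the set {y_1,…,y_n} of cardinality at most t) satisfies s_i(y) = s_i(x) for all i = 1,…,k. -/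
/-!
A point with at most `t` distinct coordinates is `b ∘ σ` for some `b : Fin t → ℝ` and one of
finitely many `σ : Fin n → Fin t`, so the first `k` power sums of such points form a finite union
of `C¹` images of `ℝᵗ`, of Hausdorff dimension at most `t`. On the other hand the power-sum map
`ℝᵏ → ℝᵏ` has Jacobian `diag(1, …, k) · Vandermonde` at a point with distinct coordinates, so by
the inverse function theorem its image contains an open set, of dimension `k > t`. Padding a point
of `ℝᵏ` outside the first image by zeros gives the required `x ∈ ℝⁿ`.
-/

open Set Topology
open scoped ENNReal

noncomputable section

theorem exists_eq_comp_of_ncard_range_le {ι α : Type*} [Finite ι] [Nonempty α] {y : ι → α}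
    {t : ℕ} (hy : (range y).ncard ≤ t) : ∃ (σ : ι → Fin t) (b : Fin t → α), y = b ∘ σ := by
  let e : range y ↪ Fin t :=
    (Finite.equivFin (range y)).toEmbedding.trans (Fin.castLEEmb (by rwa [Nat.card_coe_set_eq]))
  refine ⟨e ∘ rangeFactorization y,
    Function.extend e Subtype.val fun _ => Classical.arbitrary α, ?_⟩
  funext j
  simp [e.injective.extend_apply]

def powerSums {ι : Type*} [Fintype ι] (k : ℕ) (y : ι → ℝ) : Fin k → ℝ :=
  fun i => ∑ j, y j ^ ((i : ℕ) + 1)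

namespace powerSums

variable {ι : Type*} [Fintype ι] (k : ℕ)

theorem contDiff : ContDiff ℝ 1 (powerSums (ι := ι) k) :=
  contDiff_pi.2 fun _ => ContDiff.sum fun j _ => (contDiff_apply ℝ ℝ j).pow _

def jacobian (a : ι → ℝ) : Matrix (Fin k) ι ℝ :=
  fun i j => ((i : ℕ) + 1 : ℕ) * a j ^ (i : ℕ)

theorem hasStrictFDerivAt (a : ι → ℝ) :
    HasStrictFDerivAt (powerSums k) (jacobian k a).mulVecLin.toContinuousLinearMap a := by
  refine hasStrictFDerivAt_pi'' fun i => ?_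
  convert HasStrictFDerivAt.fun_sum (u := Finset.univ) fun j _ =>
    (hasStrictFDerivAt_apply (𝕜 := ℝ) j a).pow ((i : ℕ) + 1) using 1
  · rfl
  · ext v
    simp [jacobian, Matrix.mulVec, dotProduct, mul_comm]

theorem det_jacobian_ne_zero {a : Fin k → ℝ} (ha : Function.Injective a) :
    (jacobian k a).det ≠ 0 := by
  have hfactor : jacobian k a = Matrix.diagonal (fun i : Fin k => (((i : ℕ) + 1 : ℕ) : ℝ)) *
      (Matrix.vandermonde a).transpose := by
    ext i j
    simp [jacobian, Matrix.mul_apply, Matrix.diagonal, Matrix.vandermonde]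
  rw [hfactor, Matrix.det_mul, Matrix.det_transpose, Matrix.det_diagonal]
  exact mul_ne_zero (Finset.prod_ne_zero_iff.2 fun i _ => by positivity)
    (Matrix.det_vandermonde_ne_zero_iff.2 ha)

theorem range_mem_nhds {a : Fin k → ℝ} (ha : Function.Injective a) :
    range (powerSums (ι := Fin k) k) ∈ 𝓝 (powerSums k a) := by
  have hsurj : ((jacobian k a).mulVecLin.toContinuousLinearMap).range = ⊤ := by
    rw [LinearMap.range_eq_top]
    exact Matrix.mulVec_surjective_iff_isUnit.2
      ((Matrix.isUnit_iff_isUnit_det _).2 (det_jacobian_ne_zero k ha).isUnit)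
  rw [← (hasStrictFDerivAt k a).map_nhds_eq_of_surj hsurj]
  exact Filter.range_mem_map

theorem dimH_range : dimH (range (powerSums (ι := Fin k) k)) = k := by
  have ha : Function.Injective fun j : Fin k => (j : ℝ) :=
    Nat.cast_injective.comp Fin.val_injective
  rw [Real.dimH_of_mem_nhds (range_mem_nhds k ha), Module.finrank_fin_fun]

theorem comp_extend_zero {κ : Type*} [Fintype κ] {e : ι → κ} (he : Function.Injective e)
    (b : ι → ℝ) : powerSums k (Function.extend e b 0) = powerSums k b := by
  funext i
  refine (Fintype.sum_of_injective e he _ _ (fun j hj => ?_) fun j => by rw [he.extend_apply]).symm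
  rw [Function.extend_apply' _ _ _ (by simpa using hj)]
  simp

theorem dimH_image_ncard_range_le (t : ℕ) :
    dimH (powerSums k '' {y : ι → ℝ | (range y).ncard ≤ t}) ≤ t := by
  have hcover : powerSums k '' {y : ι → ℝ | (range y).ncard ≤ t} ⊆
      ⋃ σ : ι → Fin t, range fun b : Fin t → ℝ => powerSums k (b ∘ σ) := by
    rintro _ ⟨y, hy, rfl⟩
    obtain ⟨σ, b, rfl⟩ := exists_eq_comp_of_ncard_range_le hy
    exact mem_iUnion.2 ⟨σ, b, rfl⟩
  refine (dimH_mono hcover).trans ?_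
  rw [dimH_iUnion]
  refine iSup_le fun σ => ?_
  have hσ : ContDiff ℝ 1 fun b : Fin t → ℝ => b ∘ σ :=
    contDiff_pi.2 fun j => contDiff_apply ℝ ℝ (σ j)
  simpa [Function.comp_def] using ((contDiff k).comp hσ).dimH_range_le

theorem exists_notMem_image_ncard_range_le {t : ℕ} (htk : t < k) :
    ∃ b : Fin k → ℝ, powerSums k b ∉ powerSums k '' {y : ι → ℝ | (range y).ncard ≤ t} := by
  by_contra! hcover
  have hdim := (dimH_mono (range_subset_iff.2 hcover)).trans (dimH_image_ncard_range_le k t)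
  rw [dimH_range] at hdim
  exact htk.not_ge (mod_cast hdim)

end powerSums

end

theorem stratum_dimension_sharp_Sn_general
    (n : ℕ) (t k : ℕ) (htk : t < k) (hkn : k ≤ n) :
    ∃ x : Fin n → ℝ, ∀ y : Fin n → ℝ, (Set.range y).ncard ≤ t →
      ¬(∀ i, 1 ≤ i → i ≤ k → ∑ j, y j ^ i = ∑ j, x j ^ i) := by
  obtain ⟨b, hb⟩ := powerSums.exists_notMem_image_ncard_range_le (ι := Fin n) k htk
  refine ⟨Function.extend (Fin.castLE hkn) b 0, fun y hy hmatch => hb ⟨y, hy, ?_⟩⟩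
  rw [← powerSums.comp_extend_zero k (Fin.castLE_injective hkn) b]
  funext i
  exact hmatch (i + 1) (Nat.le_add_left 1 i) i.isLt

/-- Proposition 2.8 for `G = Sₙ`, `J = {1,…,k}`: for `t < k ≤ n` there is a point
`x ∈ ℝⁿ` whose first `k` power sums are not matched by any point with at most `t`
distinct coordinates; thus the dimension bound in Conjecture 1.3 is best possible. -/
theorem stratum_dimension_sharp_Sn
    (n : ℕ) (hn : 1 ≤ n) (t k : ℕ) (htk : t < k) (hkn : k ≤ n) :
    ∃ x : Fin n → ℝ, ∀ y : Fin n → ℝ, (Set.range y).ncard ≤ t →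
      ¬(∀ i, 1 ≤ i → i ≤ k → ∑ j, y j ^ i = ∑ j, x j ^ i) :=
  stratum_dimension_sharp_Sn_general n t k htk hkn
end

section
/- Let n ≥ 2. The n−1 functions A ↦ tr(A²), A ↦ tr(A³), …, A ↦ tr(Aⁿ), viewed as elements of the ℝ-algebra of real-valued functions on the space {A ∈ M_n(ℝ) : tr A = 0} of trace-zero real n×n matrices, are algebraically independent over ℝ; that is, there is no nonzero polynomial F ∈ ℝ[y_2,…,y_n] with F(tr(A²),…,tr(Aⁿ)) = 0 for all trace-zero real n×n matrices A. -/
open MvPolynomial Matrix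

/-!
Restricting to diagonal matrices, it suffices to show that `F(p₂, …, pₙ)` vanishes on the
hyperplane `∑ xᵢ = 0` only if `F = 0`, where `p_k = ∑ xᵢ ^ k`. The power sums `p₁, …, pₙ` are
algebraically independent: by Newton's identities they generate the same algebra as the
elementary symmetric polynomials, and a surjective endomorphism of the Noetherian ring
`K[y₁, …, yₙ]` is injective. Subtracting the mean of `x` lands on the hyperplane, and the binomial
theorem writes `p_k(x - mean x)` as `ψ_k(p₁(x), …, pₙ(x))` for a polynomial `ψ_k` with
`ψ_k(0, y₂, …, yₙ) = y_k`. Hence `F(ψ₂, …, ψₙ)` vanishes at `(p₁, …, pₙ)`, so it is zero, and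
setting `y₁ = 0` gives `F = 0`.
-/

theorem IsNoetherianRing.injective_of_surjective_endomorphism {R : Type*} [Ring R]
    [IsNoetherianRing R] (f : R →+* R) (hf : Function.Surjective f) : Function.Injective f := by
  have hmono : Monotone fun k : ℕ => RingHom.ker (f ^ k) := by
    refine monotone_nat_of_le_succ fun k x hx => ?_
    rw [RingHom.mem_ker, RingHom.coe_pow] at hx ⊢
    rw [Function.iterate_succ_apply', hx, map_zero]
  obtain ⟨N, hN⟩ := monotone_stabilizes_iff_noetherian.mpr inferInstance ⟨_, hmono⟩
  have hker : RingHom.ker (f ^ N) = RingHom.ker (f ^ (N + 1)) := hN _ N.le_succ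
  refine (injective_iff_map_eq_zero f).mpr fun x hx => ?_
  obtain ⟨y, rfl⟩ := hf.iterate N x
  have hy : y ∈ RingHom.ker (f ^ (N + 1)) := by
    rwa [RingHom.mem_ker, RingHom.coe_pow, Function.iterate_succ_apply']
  rwa [← hker, RingHom.mem_ker, RingHom.coe_pow] at hy

theorem AlgebraicIndependent.of_adjoin_range_eq {ι R A : Type*} [Finite ι] [CommRing R]
    [IsNoetherianRing R] [CommRing A] [Algebra R A] {x y : ι → A}
    (hx : AlgebraicIndependent R x)
    (h : Algebra.adjoin R (Set.range x) = Algebra.adjoin R (Set.range y)) :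
    AlgebraicIndependent R y := by
  rw [Algebra.adjoin_range_eq_range_aeval, Algebra.adjoin_range_eq_range_aeval] at h
  have hy (i : ι) : ∃ q : MvPolynomial ι R, aeval x q = y i := by
    rw [← AlgHom.mem_range, h]
    exact ⟨X i, aeval_X (R := R) y i⟩
  choose g hg using hy
  have hcomp : ⇑(aeval (R := R) y) = aeval x ∘ aeval g := by
    ext q
    rw [Function.comp_apply, comp_aeval_apply, funext hg]
  have hsurj : Function.Surjective (aeval g : MvPolynomial ι R →ₐ[R] MvPolynomial ι R) := by
    intro z
    obtain ⟨w, hw⟩ : aeval x z ∈ (aeval y).range := h ▸ AlgHom.mem_range_self _ z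
    exact ⟨w, hx (by rw [← Function.comp_apply (f := aeval x), ← hcomp]; exact hw)⟩
  rw [algebraicIndependent_iff_injective_aeval, hcomp]
  exact Function.Injective.comp hx
    (IsNoetherianRing.injective_of_surjective_endomorphism _ hsurj)

theorem Fintype.sum_sub_mean_eq_zero {ι K : Type*} [Fintype ι] [Field K] [CharZero K]
    (x : ι → K) : ∑ j, (x j - (Fintype.card ι : K)⁻¹ * ∑ i, x i) = 0 := by
  rw [Finset.sum_sub_distrib, Finset.sum_const, Finset.card_univ, nsmul_eq_mul]
  rcases isEmpty_or_nonempty ι with hι | hι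
  · simp
  · rw [← mul_assoc, mul_inv_cancel₀ (by simp), one_mul, sub_self]

theorem apply_mem_range_fin_add_one {α : Type*} (f : ℕ → α) {n j : ℕ} (h₁ : 1 ≤ j)
    (h₂ : j ≤ n) : f j ∈ Set.range fun i : Fin n => f (i + 1) :=
  ⟨⟨j - 1, by omega⟩, congrArg f (by simp; omega)⟩

namespace MvPolynomial

section PowerSums

variable {σ : Type*} [Fintype σ]

theorem psum_mem_adjoin_esymm {R : Type*} [CommRing R] {n k : ℕ} (hk : k ≤ n) :
    psum σ R k ∈ Algebra.adjoin R (Set.range fun i : Fin n => esymm σ R (i + 1)) := by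
  induction k using Nat.strong_induction_on with
  | _ k ih =>
  rcases k.eq_zero_or_pos with rfl | hk₀
  · rw [psum_zero]
    exact Subalgebra.natCast_mem _ _
  have hesymm {j : ℕ} (h₁ : 1 ≤ j) (h₂ : j ≤ n) :=
    Algebra.subset_adjoin (R := R) (apply_mem_range_fin_add_one (esymm σ R) h₁ h₂)
  rw [psum_eq_mul_esymm_sub_sum σ R k hk₀]
  refine sub_mem (mul_mem (mul_mem (pow_mem (neg_mem (one_mem _)) _)
    (Subalgebra.natCast_mem _ _)) (hesymm hk₀ hk)) (sum_mem fun a ha => ?_)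
  simp only [Finset.mem_filter, Finset.HasAntidiagonal.mem_antidiagonal, Set.mem_Ioo] at ha
  exact mul_mem (mul_mem (pow_mem (neg_mem (one_mem _)) _) (hesymm ha.2.1 (by omega)))
    (ih _ (by omega) (by omega))

theorem esymm_mem_adjoin_psum {K : Type*} [Field K] [CharZero K] {n k : ℕ} (hk : k ≤ n) :
    esymm σ K k ∈ Algebra.adjoin K (Set.range fun i : Fin n => psum σ K (i + 1)) := by
  induction k using Nat.strong_induction_on with
  | _ k ih =>
  rcases k.eq_zero_or_pos with rfl | hk₀
  · rw [esymm_zero]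
    exact one_mem _
  have hpsum {j : ℕ} (h₁ : 1 ≤ j) (h₂ : j ≤ n) :=
    Algebra.subset_adjoin (R := K) (apply_mem_range_fin_add_one (psum σ K) h₁ h₂)
  have hk' : (k : K) ≠ 0 := by exact_mod_cast hk₀.ne'
  rw [← inv_smul_smul₀ hk' (esymm σ K k), Nat.cast_smul_eq_nsmul, nsmul_eq_mul,
    mul_esymm_eq_sum]
  refine Subalgebra.smul_mem _
    (mul_mem (pow_mem (neg_mem (one_mem _)) _) (sum_mem fun a ha => ?_)) _
  simp only [Finset.mem_filter, Finset.HasAntidiagonal.mem_antidiagonal] at ha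
  exact mul_mem (mul_mem (pow_mem (neg_mem (one_mem _)) _) (ih _ ha.2 (by omega)))
    (hpsum (by omega) (by omega))

theorem algebraicIndependent_esymm (R : Type*) [CommRing R] {n : ℕ}
    (hn : n ≤ Fintype.card σ) :
    AlgebraicIndependent R (fun i : Fin n => esymm σ R (i + 1)) := by
  intro p q hpq
  apply esymmAlgHom_injective R hn
  apply Subtype.ext
  rwa [esymmAlgHom_apply, esymmAlgHom_apply]

theorem algebraicIndependent_psum (K : Type*) [Field K] [CharZero K] {n : ℕ}
    (hn : n ≤ Fintype.card σ) :
    AlgebraicIndependent K (fun i : Fin n => psum σ K (i + 1)) :=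
  (algebraicIndependent_esymm K hn).of_adjoin_range_eq <| le_antisymm
    (Algebra.adjoin_le <| Set.range_subset_iff.mpr fun _ => esymm_mem_adjoin_psum (by omega))
    (Algebra.adjoin_le <| Set.range_subset_iff.mpr fun _ => psum_mem_adjoin_esymm (by omega))

end PowerSums

noncomputable section ShiftedPowerSums

variable (K : Type*) [Field K] (n : ℕ)

/-- In `K[y₁, …, yₙ]`, with `yᵢ₊₁` encoded as `X i : MvPolynomial (Fin n) K`, the variable that
stands for the power sum `p_m`, where `p₀ = n` (and junk `0` for `m > n`). -/
def powerSumVar : ℕ → MvPolynomial (Fin n) K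
  | 0 => n
  | m + 1 => if h : m < n then X ⟨m, h⟩ else 0

/-- `p_k(x - mean x) = ∑ₘ (k choose m) pₘ(x) (-p₁(x) / n) ^ (k - m)`, by the binomial theorem. -/
def shiftedPowerSum (k : ℕ) : MvPolynomial (Fin n) K :=
  ∑ m ∈ Finset.range (k + 1),
    powerSumVar K n m * (-(C (n : K)⁻¹ * powerSumVar K n 1)) ^ (k - m) *
      (k.choose m : MvPolynomial (Fin n) K)

variable {K n}

theorem aeval_psum_powerSumVar {m : ℕ} (hm : m ≤ n) :
    aeval (fun i : Fin n => psum (Fin n) K (i + 1)) (powerSumVar K n m) = psum (Fin n) K m := by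
  cases m with
  | zero => simp [powerSumVar, psum_zero]
  | succ m => simp [powerSumVar, show m < n by omega]

theorem aeval_psum_shiftedPowerSum {k : ℕ} (hk : k ≤ n) :
    aeval (fun i : Fin n => psum (Fin n) K (i + 1)) (shiftedPowerSum K n k) =
      ∑ i, (X i - C (n : K)⁻¹ * ∑ j, X j) ^ k := by
  have hp {m : ℕ} (hm : m ∈ Finset.range (k + 1)) :=
    aeval_psum_powerSumVar (K := K) (n := n) (m := m) (by simp at hm; omega)
  have hp₁ : aeval (fun i : Fin n => psum (Fin n) K (i + 1)) (powerSumVar K n 1) =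
      ∑ j, X j := by
    rcases n.eq_zero_or_pos with rfl | hn
    · simp [powerSumVar]
    · rw [aeval_psum_powerSumVar hn, psum_one]
  simp only [shiftedPowerSum, map_sum, map_mul, map_pow, map_neg, map_natCast, algHom_C,
    algebraMap_eq, hp₁]
  rw [Finset.sum_congr rfl fun m hm => by rw [hp hm]]
  simp only [psum, Finset.sum_mul, sub_eq_add_neg, add_pow]
  rw [Finset.sum_comm]

theorem aeval_ite_shiftedPowerSum {k : ℕ} (h₂ : 2 ≤ k) (hk : k ≤ n) :
    aeval (fun i : Fin n => if (i : ℕ) = 0 then 0 else (X i : MvPolynomial (Fin n) K))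
      (shiftedPowerSum K n k) = X ⟨k - 1, by omega⟩ := by
  have hvar₁ : aeval (fun i : Fin n => if (i : ℕ) = 0 then 0 else (X i : MvPolynomial (Fin n) K))
      (powerSumVar K n 1) = 0 := by
    rcases n.eq_zero_or_pos with rfl | hn <;> simp [powerSumVar, *]
  simp only [shiftedPowerSum, map_sum, map_mul, map_pow, map_neg, hvar₁, mul_zero, neg_zero]
  rw [Finset.sum_eq_single k]
  · obtain ⟨j, rfl⟩ : ∃ j, k = j + 1 := ⟨k - 1, by omega⟩
    simp [powerSumVar, show j < n by omega, show j ≠ 0 by omega]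
  · intro m hm hmk
    rw [zero_pow (by simp at hm; omega), mul_zero, zero_mul]
  · simp

theorem eq_zero_of_eval_psum_eq_zero_of_sum_eq_zero [CharZero K]
    (F : MvPolynomial {i : ℕ // 2 ≤ i ∧ i ≤ n} K)
    (hF : ∀ x : Fin n → K, ∑ i, x i = 0 →
      eval (fun i : {i : ℕ // 2 ≤ i ∧ i ≤ n} => eval x (psum (Fin n) K i)) F = 0) :
    F = 0 := by
  have hQ : aeval (fun i : Fin n => psum (Fin n) K (i + 1))
      (aeval (fun i : {i : ℕ // 2 ≤ i ∧ i ≤ n} => shiftedPowerSum K n i) F) = 0 := by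
    rw [comp_aeval_apply]
    simp_rw [fun i : {i : ℕ // 2 ≤ i ∧ i ≤ n} => aeval_psum_shiftedPowerSum (K := K) i.2.2]
    refine MvPolynomial.funext fun x => ?_
    rw [map_zero]
    change aeval x (aeval _ F) = 0
    rw [comp_aeval_apply]
    simpa [psum] using hF _ (by simpa using Fintype.sum_sub_mean_eq_zero x)
  have hQ₀ : aeval (fun i : {i : ℕ // 2 ≤ i ∧ i ≤ n} => shiftedPowerSum K n i) F = 0 :=
    (algebraicIndependent_psum K (by simp)).eq_zero_of_aeval_eq_zero _ hQ
  set e : {i : ℕ // 2 ≤ i ∧ i ≤ n} → Fin n := fun i => ⟨i - 1, by omega⟩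
  have he : Function.Injective e := fun i j hij => by
    have := congrArg Fin.val hij
    ext
    simp only [e] at this
    omega
  have hsub : (fun i : {i : ℕ // 2 ≤ i ∧ i ≤ n} =>
      aeval (fun j : Fin n => if (j : ℕ) = 0 then 0 else X j) (shiftedPowerSum K n i)) =
        (X : Fin n → MvPolynomial (Fin n) K) ∘ e := by
    funext i
    exact aeval_ite_shiftedPowerSum i.2.1 i.2.2
  have hF₀ : rename e F = 0 := by
    rw [rename_eq_aeval, ← hsub, ← comp_aeval_apply, hQ₀, map_zero]
  exact rename_injective e he (hF₀.trans (map_zero _).symm)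

end ShiftedPowerSums

end MvPolynomial

theorem traces_algebraically_independent_general
    (n : ℕ) (F : MvPolynomial {i : ℕ // 2 ≤ i ∧ i ≤ n} ℝ)
    (hF : ∀ A : Matrix (Fin n) (Fin n) ℝ, A.trace = 0 →
      eval (fun i : {i : ℕ // 2 ≤ i ∧ i ≤ n} => (A ^ (i : ℕ)).trace) F = 0) :
    F = 0 :=
  eq_zero_of_eval_psum_eq_zero_of_sum_eq_zero F fun x hx => by
    simpa [psum, diagonal_pow, trace_diagonal] using hF (diagonal x) (by rwa [trace_diagonal])

/-- The algebraic independence part of Theorem 6.1: the functions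
`A ↦ tr(A²), …, A ↦ tr(Aⁿ)` on trace-zero real `n × n` matrices are algebraically
independent over `ℝ`: no nonzero polynomial `F ∈ ℝ[y₂,…,yₙ]` satisfies
`F(tr(A²),…,tr(Aⁿ)) = 0` for all trace-zero `A`. -/
theorem traces_algebraically_independent
    (n : ℕ) (hn : 2 ≤ n) (F : MvPolynomial {i : ℕ // 2 ≤ i ∧ i ≤ n} ℝ)
    (hF : ∀ A : Matrix (Fin n) (Fin n) ℝ, A.trace = 0 →
      eval (fun i : {i : ℕ // 2 ≤ i ∧ i ≤ n} => (A ^ (i : ℕ)).trace) F = 0) :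
    F = 0 :=
  traces_algebraically_independent_general n F hF
end

section
/- For every x ∈ ℝ⁴ with x_1² + x_2² + x_3² + x_4² = 1, one has 6 ≤ Σ_{1≤i<j≤4} ((x_i + x_j)⁶ + (x_i − x_j)⁶) ≤ 9. Moreover both bounds are attained: the lower bound at x = (1,0,0,0) and the upper bound at x = (1/√2, 1/√2, 0, 0). Equivalently, for every y ∈ ℝ⁴ with y_1,…,y_4 ≥ 0 and y_1 + y_2 + y_3 + y_4 = 1, one has 1 ≤ 5(y_1²+y_2²+y_3²+y_4²) − 4(y_1³+y_2³+y_3³+y_4³) ≤ 3/2. -/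
/-!
With `yᵢ = xᵢ²` one has `π₂(x) = 6 (5 s₁ s₂ − 4 s₃)(y)`, so on the sphere `π₂(x) = 6 ∑ φ(yᵢ)` with
`φ(t) = 5t² − 4t³` and `y` on the simplex. For the lower bound, `5 s₁ s₂ − 4 s₃ − s₁³` equals
`∑ₖ yₖ ∑ (yᵢ − yⱼ)²` (over the pairs `{i, j}` avoiding `k`) when there are four variables.
For the upper bound: if every `yᵢ ≤ 1/2` then `φ(yᵢ) ≤ (3/2) yᵢ`; otherwise one `yₖ > 1/2`, and
since `φ(u + v) − φ(u) − φ(v) = 2uv(5 − 6(u + v))`, `φ` is superadditive on `[0, 5/6]`, so the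
remaining coordinates merge into `1 − yₖ` and `φ(t) + φ(1 − t) = 3/2 − 2(t − 1/2)²`.
-/

open Finset

def fiveSqSubFourCube (t : ℝ) : ℝ := 5 * t ^ 2 - 4 * t ^ 3

theorem sum_fiveSqSubFourCube {ι : Type*} (s : Finset ι) (y : ι → ℝ) :
    ∑ i ∈ s, fiveSqSubFourCube (y i) = 5 * ∑ i ∈ s, y i ^ 2 - 4 * ∑ i ∈ s, y i ^ 3 := by
  simp only [fiveSqSubFourCube, sum_sub_distrib, mul_sum]

theorem fiveSqSubFourCube_add_le {u v : ℝ} (hu : 0 ≤ u) (hv : 0 ≤ v) (huv : u + v ≤ 5 / 6) :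
    fiveSqSubFourCube u + fiveSqSubFourCube v ≤ fiveSqSubFourCube (u + v) := by
  have : 0 ≤ 2 * u * v * (5 - 6 * (u + v)) := by
    have : 0 ≤ 5 - 6 * (u + v) := by linarith
    positivity
  unfold fiveSqSubFourCube
  linear_combination this

theorem fiveSqSubFourCube_le_of_le_half {t : ℝ} (h₀ : 0 ≤ t) (h : t ≤ 1 / 2) :
    fiveSqSubFourCube t ≤ 3 / 2 * t := by
  have : 0 ≤ 4 * t * (1 / 2 - t) * (3 / 4 - t) := by
    have : 0 ≤ 1 / 2 - t := by linarith
    have : 0 ≤ 3 / 4 - t := by linarith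
    positivity
  unfold fiveSqSubFourCube
  linear_combination this

theorem fiveSqSubFourCube_add_one_sub_le (t : ℝ) :
    fiveSqSubFourCube t + fiveSqSubFourCube (1 - t) ≤ 3 / 2 := by
  unfold fiveSqSubFourCube
  linear_combination 2 * sq_nonneg (t - 1 / 2)

theorem sum_fiveSqSubFourCube_le {ι : Type*} (s : Finset ι) {y : ι → ℝ}
    (hy : ∀ i ∈ s, 0 ≤ y i) (hs : ∑ i ∈ s, y i ≤ 5 / 6) :
    ∑ i ∈ s, fiveSqSubFourCube (y i) ≤ fiveSqSubFourCube (∑ i ∈ s, y i) := by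
  classical
  induction s using Finset.induction_on with
  | empty => simp [fiveSqSubFourCube]
  | insert k s hk ih =>
    rw [sum_insert hk, sum_insert hk] at *
    have hyk := hy k (mem_insert_self k s)
    have hys : ∀ i ∈ s, 0 ≤ y i := fun i hi => hy i (mem_insert_of_mem hi)
    have hsum : 0 ≤ ∑ i ∈ s, y i := sum_nonneg hys
    calc fiveSqSubFourCube (y k) + ∑ i ∈ s, fiveSqSubFourCube (y i)
        ≤ fiveSqSubFourCube (y k) + fiveSqSubFourCube (∑ i ∈ s, y i) := by
          gcongr
          exact ih hys (by linarith)
      _ ≤ _ := fiveSqSubFourCube_add_le hyk hsum hs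

theorem sum_fiveSqSubFourCube_le_three_halves {ι : Type*} (s : Finset ι) {y : ι → ℝ}
    (hy : ∀ i ∈ s, 0 ≤ y i) (hs : ∑ i ∈ s, y i = 1) :
    ∑ i ∈ s, fiveSqSubFourCube (y i) ≤ 3 / 2 := by
  classical
  by_cases hsmall : ∀ i ∈ s, y i ≤ 1 / 2
  · calc ∑ i ∈ s, fiveSqSubFourCube (y i) ≤ ∑ i ∈ s, 3 / 2 * y i :=
          sum_le_sum fun i hi => fiveSqSubFourCube_le_of_le_half (hy i hi) (hsmall i hi)
      _ = 3 / 2 := by rw [← mul_sum, hs, mul_one]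
  · push Not at hsmall
    obtain ⟨k, hk, hyk⟩ := hsmall
    have hrest : ∑ i ∈ s.erase k, y i = 1 - y k := by
      rw [← hs, ← add_sum_erase s y hk, add_sub_cancel_left]
    have hy' : ∀ i ∈ s.erase k, 0 ≤ y i := fun i hi => hy i (mem_of_mem_erase hi)
    calc ∑ i ∈ s, fiveSqSubFourCube (y i)
        = fiveSqSubFourCube (y k) + ∑ i ∈ s.erase k, fiveSqSubFourCube (y i) :=
          (add_sum_erase s _ hk).symm
      _ ≤ fiveSqSubFourCube (y k) + fiveSqSubFourCube (1 - y k) := by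
          rw [← hrest]
          gcongr
          exact sum_fiveSqSubFourCube_le _ hy' (by linarith)
      _ ≤ 3 / 2 := fiveSqSubFourCube_add_one_sub_le (y k)

theorem cube_sum_le_five_mul_sum_mul_sum_sq_sub_four_sum_cube {a b c d : ℝ}
    (ha : 0 ≤ a) (hb : 0 ≤ b) (hc : 0 ≤ c) (hd : 0 ≤ d) :
    (a + b + c + d) ^ 3 ≤
      5 * (a + b + c + d) * (a ^ 2 + b ^ 2 + c ^ 2 + d ^ 2) - 4 * (a ^ 3 + b ^ 3 + c ^ 3 + d ^ 3) := by
  have : 0 ≤ a * ((b - c) ^ 2 + (b - d) ^ 2 + (c - d) ^ 2)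
      + b * ((a - c) ^ 2 + (a - d) ^ 2 + (c - d) ^ 2)
      + c * ((a - b) ^ 2 + (a - d) ^ 2 + (b - d) ^ 2)
      + d * ((a - b) ^ 2 + (a - c) ^ 2 + (b - c) ^ 2) := by
    positivity
  linear_combination this

theorem one_le_sum_fiveSqSubFourCube {y : Fin 4 → ℝ} (hy : ∀ i, 0 ≤ y i) (hs : ∑ i, y i = 1) :
    1 ≤ ∑ i, fiveSqSubFourCube (y i) := by
  simp only [Fin.sum_univ_four, fiveSqSubFourCube] at hs ⊢
  have hcube := cube_sum_le_five_mul_sum_mul_sum_sq_sub_four_sum_cube (hy 0) (hy 1) (hy 2) (hy 3)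
  rw [hs] at hcube
  linarith

def F4Invariant6 (x : Fin 4 → ℝ) : ℝ :=
  ∑ i : Fin 4, ∑ j : Fin 4, if i < j then (x i + x j) ^ 6 + (x i - x j) ^ 6 else 0

theorem F4Invariant6_eq (x : Fin 4 → ℝ) :
    F4Invariant6 x = 6 * (5 * (∑ i, x i ^ 2) * ∑ i, (x i ^ 2) ^ 2 - 4 * ∑ i, (x i ^ 2) ^ 3) := by
  simp only [F4Invariant6, Fin.sum_univ_four, Fin.reduceLT, lt_self_iff_false, ↓reduceIte]
  ring

theorem F4Invariant6_eq_of_sum_sq_eq_one {x : Fin 4 → ℝ} (hx : ∑ i, x i ^ 2 = 1) :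
    F4Invariant6 x = 6 * ∑ i, fiveSqSubFourCube (x i ^ 2) := by
  rw [F4Invariant6_eq, hx, mul_one, sum_fiveSqSubFourCube]

/-- The extremal computation for `F₄` (proof of Theorem 1.2 for `F₄`): on the unit
sphere in `ℝ⁴` the degree-6 basic invariant
`π₂(x) = Σ_{i<j} ((xᵢ+xⱼ)⁶ + (xᵢ−xⱼ)⁶)` satisfies `6 ≤ π₂(x) ≤ 9`, with the bounds
attained at `(1,0,0,0)` and `(1/√2,1/√2,0,0)`; equivalently, on the standard
`3`-simplex `1 ≤ 5·s₂(y) − 4·s₃(y) ≤ 3/2`. -/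
theorem F4_invariant_extrema :
    (∀ x : Fin 4 → ℝ, (∑ i, x i ^ 2) = 1 →
      6 ≤ (∑ i : Fin 4, ∑ j : Fin 4,
            if i < j then (x i + x j) ^ 6 + (x i - x j) ^ 6 else 0) ∧
      (∑ i : Fin 4, ∑ j : Fin 4,
            if i < j then (x i + x j) ^ 6 + (x i - x j) ^ 6 else 0) ≤ 9) ∧
    ((∑ i : Fin 4, ∑ j : Fin 4,
        if i < j then ((![1,0,0,0] : Fin 4 → ℝ) i + ![1,0,0,0] j) ^ 6 +
          ((![1,0,0,0] : Fin 4 → ℝ) i - ![1,0,0,0] j) ^ 6 else 0) = 6) ∧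
    ((∑ i : Fin 4, ∑ j : Fin 4,
        if i < j then
          ((![1/Real.sqrt 2, 1/Real.sqrt 2, 0, 0] : Fin 4 → ℝ) i +
            ![1/Real.sqrt 2, 1/Real.sqrt 2, 0, 0] j) ^ 6 +
          ((![1/Real.sqrt 2, 1/Real.sqrt 2, 0, 0] : Fin 4 → ℝ) i -
            ![1/Real.sqrt 2, 1/Real.sqrt 2, 0, 0] j) ^ 6 else 0) = 9) ∧
    (∀ y : Fin 4 → ℝ, (∀ i, 0 ≤ y i) → (∑ i, y i) = 1 →
      1 ≤ 5 * (∑ i, y i ^ 2) - 4 * (∑ i, y i ^ 3) ∧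
      5 * (∑ i, y i ^ 2) - 4 * (∑ i, y i ^ 3) ≤ 3 / 2) := by
  refine ⟨fun x hx => ?_, ?_, ?_, fun y hy hs => ?_⟩
  · have hy : ∀ i, 0 ≤ x i ^ 2 := fun i => sq_nonneg (x i)
    have hlow := one_le_sum_fiveSqSubFourCube hy hx
    have hhigh := sum_fiveSqSubFourCube_le_three_halves univ (fun i _ => hy i) hx
    change 6 ≤ F4Invariant6 x ∧ F4Invariant6 x ≤ 9
    rw [F4Invariant6_eq_of_sum_sq_eq_one hx]
    constructor <;> linarith
  · change F4Invariant6 ![1, 0, 0, 0] = 6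
    rw [F4Invariant6_eq]
    simp only [Fin.sum_univ_four, Matrix.cons_val]
    norm_num
  · change F4Invariant6 ![1 / Real.sqrt 2, 1 / Real.sqrt 2, 0, 0] = 9
    rw [F4Invariant6_eq]
    simp only [Fin.sum_univ_four, Matrix.cons_val]
    norm_num
  · rw [← sum_fiveSqSubFourCube]
    exact ⟨one_le_sum_fiveSqSubFourCube hy hs,
      sum_fiveSqSubFourCube_le_three_halves univ (fun i _ => hy i) hs⟩
end
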